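/- arXiv:2511.17539 — 15 statements merged into one kernel-verified Lean document; each statement's English description precedes it below -/
import Mathlib

section
/- If f : (0, ∞) → ℝ is continuous and for every x > 0 the sequence f(n·x) tends to 0 as n → ∞ (n ranging over positive integers), then f(x) → 0 as x → ∞. -/
/-!
Baire category argument. Fix `ε > 0` and let `E N` be the set of `x ≥ 1` with `|f (n * x)| ≤ ε`
for all `n > N`. By continuity the `E N` are closed, and by hypothesis they cover `[1, ∞)`, so
one of them contains an interval `[a, b]` with `1 ≤ a < b`. The dilates `n • [a, b]` overlap once
`n ≥ a / (b - a)`, so every large `x` is `n * y` with `n > N` and `y ∈ [a, b]`, whence `|f x| ≤ ε`.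
-/

open Filter Set Metric Topology

theorem exists_Icc_subset_of_Ici_subset_iUnion {ι : Type*} [Countable ι] {s : ι → Set ℝ}
    (hs : ∀ i, IsClosed (s i)) {c : ℝ} (hcover : Ici c ⊆ ⋃ i, s i) :
    ∃ i a b, c ≤ a ∧ a < b ∧ Icc a b ⊆ s i := by
  have : CompleteSpace (Ici c) := isClosed_Ici.completeSpace_coe
  obtain ⟨i, z, hz⟩ := nonempty_interior_of_iUnion_of_closed
    (fun i => (hs i).preimage continuous_subtype_val)
    (eq_univ_of_forall fun z => by simpa using hcover z.2)
  have hzs : s i ∈ 𝓝[≥] (z : ℝ) := nhdsWithin_mono _ (Ici_subset_Ici.2 z.2)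
    (preimage_coe_mem_nhds_subtype.1 (mem_interior_iff_mem_nhds.1 hz))
  obtain ⟨b, hzb, hsub⟩ := mem_nhdsGE_iff_exists_Icc_subset.1 hzs
  exact ⟨i, z, b, z.2, hzb, hsub⟩

theorem isClosed_setOf_forall_nat_gt_mul_mem {X : Type*} [TopologicalSpace X] {f : ℝ → X}
    (hf : ContinuousOn f (Ioi 0)) {K : Set X} (hK : IsClosed K) {c : ℝ} (hc : 0 < c) (N : ℕ) :
    IsClosed {x | c ≤ x ∧ ∀ n : ℕ, N < n → f (n * x) ∈ K} := by
  have hn (n : ℕ) (hn : N < n) : IsClosed (Ici c ∩ (fun x => f (n * x)) ⁻¹' K) := by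
    refine ContinuousOn.preimage_isClosed_of_isClosed ?_ isClosed_Ici hK
    refine hf.comp (continuous_const.mul continuous_id).continuousOn fun x hx => ?_
    have : (0 : ℝ) < n := by exact_mod_cast (Nat.zero_le N).trans_lt hn
    exact mul_pos this (hc.trans_le hx)
  convert isClosed_Ici.inter (isClosed_biInter hn) using 1
  ext x
  simp only [mem_ofPred_eq, mem_inter_iff, mem_Ici, mem_iInter, mem_preimage]
  exact and_congr_right fun hx => forall₂_congr fun n _ => (and_iff_right hx).symm

theorem eventually_exists_nat_mul_mem_Icc {a b : ℝ} (ha : 0 < a) (hab : a < b) (N : ℕ) :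
    ∀ᶠ x in atTop, ∃ n : ℕ, N < n ∧ ∃ y ∈ Icc a b, n * y = x := by
  filter_upwards [eventually_ge_atTop (a * b / (b - a)), eventually_ge_atTop (a * (N + 1))]
    with x hx_gap hx_N
  have hgap : a * b ≤ x * (b - a) := (div_le_iff₀ (sub_pos.2 hab)).1 hx_gap
  set n := ⌊x / a⌋₊
  have hx : 0 ≤ x := (by positivity : (0 : ℝ) ≤ a * (N + 1)).trans hx_N
  have hn_le : a * n ≤ x := (le_div_iff₀' ha).1 (Nat.floor_le (div_nonneg hx ha.le))
  have hn_gt : x - a < a * n := by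
    have := Nat.sub_one_lt_floor (x / a)
    rwa [div_sub_one ha.ne', div_lt_iff₀' ha] at this
  have hNn : N < n := by
    have : a * N < a * n := by linarith
    exact_mod_cast lt_of_mul_lt_mul_left this ha.le
  have hn : (0 : ℝ) < n := by exact_mod_cast (Nat.zero_le N).trans_lt hNn
  refine ⟨n, hNn, x / n, ⟨(le_div_iff₀ hn).2 ?_, (div_le_iff₀ hn).2 ?_⟩, mul_div_cancel₀ _ hn.ne'⟩
  · linarith
  · nlinarith

theorem croft_original (f : ℝ → ℝ) (hf : ContinuousOn f (Set.Ioi (0:ℝ)))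
    (h : ∀ x > (0:ℝ), Filter.Tendsto (fun n : ℕ => f (n * x)) Filter.atTop (nhds 0)) :
    Filter.Tendsto f Filter.atTop (nhds 0) := by
  refine nhds_basis_closedBall.tendsto_right_iff.2 fun ε hε => ?_
  set E : ℕ → Set ℝ := fun N => {x | 1 ≤ x ∧ ∀ n : ℕ, N < n → f (n * x) ∈ closedBall 0 ε}
  have hcover : Ici 1 ⊆ ⋃ N, E N := fun x hx => by
    obtain ⟨N, hN⟩ := eventually_atTop.1 ((h x (zero_lt_one.trans_le hx)).eventually
      (closedBall_mem_nhds 0 hε))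
    exact mem_iUnion.2 ⟨N, hx, fun n hn => hN n hn.le⟩
  obtain ⟨N, a, b, ha, hab, hsub⟩ := exists_Icc_subset_of_Ici_subset_iUnion
    (fun N => isClosed_setOf_forall_nat_gt_mul_mem hf isClosed_closedBall one_pos N) hcover
  filter_upwards [eventually_exists_nat_mul_mem_Icc (one_pos.trans_le ha) hab N]
    with x ⟨n, hn, y, hy, hxy⟩
  exact hxy ▸ (hsub hy).2 n hn
end

section
/- If U is an open unbounded subset of (0, ∞), then there exists x > 0 such that n·x ∈ U for infinitely many positive integers n. -/
theorem croft_lemma (U : Set ℝ) (hU : IsOpen U) (hsub : U ⊆ Set.Ioi (0:ℝ))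
    (hunb : ∀ M : ℝ, ∃ u ∈ U, u > M) :
    ∃ x > (0:ℝ), {n : ℕ | (n : ℝ) * x ∈ U}.Infinite := by
  -- Key step: inside any interval [a,b] ⊆ (0,∞), find a subinterval [a',b'] and n > N
  -- with n·[a',b'] ⊆ U.
  have key : ∀ (a b : ℝ) (N : ℕ), 0 < a → a < b →
      ∃ a' b' : ℝ, ∃ n : ℕ, a ≤ a' ∧ a' < b' ∧ b' ≤ b ∧ N < n ∧
        ∀ x ∈ Set.Icc a' b', (n : ℝ) * x ∈ U := by
    intro a b N ha hab
    have hba : (0:ℝ) < b - a := sub_pos.mpr hab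
    obtain ⟨M, hM⟩ := exists_nat_gt (max (N : ℝ) (max 1 (a / (b - a))))
    have hMN : (N : ℝ) < M := lt_of_le_of_lt (le_max_left _ _) hM
    have hM1 : (1 : ℝ) < M := lt_of_le_of_lt (le_trans (le_max_left _ _) (le_max_right _ _)) hM
    have hMa : a / (b - a) < M := lt_of_le_of_lt (le_trans (le_max_right _ _) (le_max_right _ _)) hM
    obtain ⟨u, huU, hu⟩ := hunb (M * a)
    have hu0 : 0 < u := lt_trans (by positivity) hu
    set n : ℕ := ⌊u / a⌋₊ with hn
    have hMn : (M : ℝ) ≤ n := by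
      have : (M : ℝ) ≤ u / a := le_of_lt ((lt_div_iff₀ ha).mpr hu)
      exact_mod_cast Nat.le_floor (by exact_mod_cast this)
    have hn0 : (0:ℝ) < n := lt_of_lt_of_le (by linarith) hMn
    have hNn : N < n := by exact_mod_cast lt_of_lt_of_le hMN hMn
    have hna : (n : ℝ) * a ≤ u := by
      have := Nat.floor_le (le_of_lt (div_pos hu0 ha))
      calc (n : ℝ) * a ≤ (u / a) * a := by nlinarith
        _ = u := div_mul_cancel₀ u (ne_of_gt ha)
    have hnb : u ≤ (n : ℝ) * b := by
      have h1 : u / a < n + 1 := Nat.lt_floor_add_one _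
      have h2 : u < ((n : ℝ) + 1) * a := by
        have := (div_lt_iff₀ ha).mp h1
        linarith
      have h3 : a ≤ (n : ℝ) * (b - a) := by
        have := (div_lt_iff₀ hba).mp hMa
        nlinarith
      nlinarith
    obtain ⟨ε, hε, hball⟩ := Metric.isOpen_iff.mp hU u huU
    refine ⟨max a ((u - ε/2) / n), min b ((u + ε/2) / n), n, le_max_left _ _, ?_, min_le_left _ _, hNn, ?_⟩
    · apply max_lt
      · apply lt_min hab
        rw [lt_div_iff₀ hn0]; nlinarith
      · apply lt_min
        · rw [div_lt_iff₀ hn0]; nlinarith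
        · rw [div_lt_div_iff₀ hn0 hn0]; nlinarith
    · intro x hx
      apply hball
      rw [Metric.mem_ball, Real.dist_eq, abs_lt]
      have hx1 : (u - ε/2) / n ≤ x := le_trans (le_max_right _ _) hx.1
      have hx2 : x ≤ (u + ε/2) / n := le_trans hx.2 (min_le_right _ _)
      have h1 : u - ε/2 ≤ (n:ℝ) * x := by
        have := (div_le_iff₀ hn0).mp hx1; linarith
      have h2 : (n:ℝ) * x ≤ u + ε/2 := by
        have := (le_div_iff₀ hn0).mp hx2; linarith
      constructor <;> linarith
  -- Iterate the key step to get nested intervals.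
  have step : ∀ s : {p : ℝ × ℝ × ℕ // 0 < p.1 ∧ p.1 < p.2.1},
      ∃ t : {p : ℝ × ℝ × ℕ // 0 < p.1 ∧ p.1 < p.2.1},
        s.1.1 ≤ t.1.1 ∧ t.1.2.1 ≤ s.1.2.1 ∧ s.1.2.2 < t.1.2.2 ∧
          ∀ x ∈ Set.Icc t.1.1 t.1.2.1, ((t.1.2.2 : ℝ)) * x ∈ U := by
    rintro ⟨⟨a, b, N⟩, ha, hab⟩
    obtain ⟨a', b', n, h1, h2, h3, h4, h5⟩ := key a b N ha hab
    exact ⟨⟨(a', b', n), lt_of_lt_of_le ha h1, h2⟩, h1, h3, h4, h5⟩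
  choose F hF1 hF2 hF3 hF4 using step
  set init : {p : ℝ × ℝ × ℕ // 0 < p.1 ∧ p.1 < p.2.1} := ⟨(1, 2, 0), one_pos, one_lt_two⟩
  set seq : ℕ → {p : ℝ × ℝ × ℕ // 0 < p.1 ∧ p.1 < p.2.1} := fun k => F^[k] init with hseqdef
  have hseq : ∀ k, seq (k + 1) = F (seq k) := fun k => Function.iterate_succ_apply' F k init
  set A : ℕ → ℝ := fun k => (seq k).1.1 with hA
  set B : ℕ → ℝ := fun k => (seq k).1.2.1 with hB
  set Nn : ℕ → ℕ := fun k => (seq k).1.2.2 with hNn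
  have hAmono : Monotone A := monotone_nat_of_le_succ fun k => by
    rw [hA]; simp only; rw [hseq k]; exact hF1 (seq k)
  have hBanti : Antitone B := antitone_nat_of_succ_le fun k => by
    rw [hB]; simp only; rw [hseq k]; exact hF2 (seq k)
  have hNmono : StrictMono Nn := strictMono_nat_of_lt_succ fun k => by
    rw [hNn]; simp only; rw [hseq k]; exact hF3 (seq k)
  have hAB : ∀ k, A k < B k := fun k => (seq k).2.2
  have hcross : ∀ j k, A j ≤ B k := fun j k =>
    le_trans (hAmono (le_max_left j k))
      (le_trans (le_of_lt (hAB (max j k))) (hBanti (le_max_right j k)))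
  have hbdd : BddAbove (Set.range A) := ⟨B 0, by rintro _ ⟨j, rfl⟩; exact hcross j 0⟩
  set x : ℝ := ⨆ k, A k with hx
  have hxge : ∀ k, A k ≤ x := fun k => le_ciSup hbdd k
  have hxle : ∀ k, x ≤ B k := fun k => ciSup_le fun j => hcross j k
  have hx0 : 0 < x := lt_of_lt_of_le (seq 0).2.1 (hxge 0)
  have hmem : ∀ k, ((Nn (k + 1) : ℝ)) * x ∈ U := by
    intro k
    have := hF4 (seq k) x ⟨by rw [← hseq k] at *; exact hxge (k + 1), by rw [← hseq k]; exact hxle (k + 1)⟩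
    rwa [← hseq k] at this
  exact ⟨x, hx0, Set.infinite_of_injective_forall_mem
    (f := fun k : ℕ => Nn (k + 1))
    (fun i j hij => Nat.succ_injective (hNmono.injective hij)) hmem⟩
end

section
/- If f : (0, ∞) → ℝ is continuous and for every x > 0 the limit lim_{n→∞} f(n·x) exists (as a real number), then lim_{x→∞} f(x) exists. -/
open Filter Set Topology

private lemma key_interval (U : Set ℝ) (hU : IsOpen U) (hUn : ∀ M : ℝ, ∃ u ∈ U, M < u)
    (n₀ : ℕ) (p q : ℝ) (hp : 0 < p) (hpq : p < q) :
    ∃ s : ℕ × ℝ × ℝ, n₀ ≤ s.1 ∧ p ≤ s.2.1 ∧ s.2.1 < s.2.2 ∧ s.2.2 ≤ q ∧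
      ∀ x ∈ Set.Icc s.2.1 s.2.2, (s.1 : ℝ) * x ∈ U := by
  obtain ⟨m, hm⟩ := exists_nat_gt (max (n₀ : ℝ) (p / (q - p)))
  have hqp : 0 < q - p := sub_pos.mpr hpq
  have hm2 : p / (q - p) < (m : ℝ) := (le_max_right _ _).trans_lt hm
  have hmn₀ : (n₀ : ℝ) < m := (le_max_left _ _).trans_lt hm
  have hmpos : 0 < (m : ℝ) := (div_pos hp hqp).trans hm2
  have hq0 : 0 < q := hp.trans hpq
  have hpm : p < (m : ℝ) * (q - p) := by
    rw [div_lt_iff₀ hqp] at hm2; linarith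
  obtain ⟨u, huU, hu⟩ := hUn ((m : ℝ) * q)
  have hupos : 0 < u := (mul_pos hmpos hq0).trans hu
  have hupm : (m : ℝ) * p < u := lt_trans (by nlinarith) hu
  have hup : (m : ℝ) < u / p := (lt_div_iff₀ hp).mpr hupm
  set k := ⌊u / p⌋₊ with hkdef
  have hkm : m ≤ k := Nat.le_floor hup.le
  have hkr : (m : ℝ) ≤ (k : ℝ) := Nat.cast_le.mpr hkm
  have hkpos : (0 : ℝ) < (k : ℝ) := lt_of_lt_of_le hmpos hkr
  have hfl : ((k : ℝ)) ≤ u / p := Nat.floor_le (div_pos hupos hp).le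
  have hfl2 : u / p < (k : ℝ) + 1 := Nat.lt_floor_add_one _
  have hk1 : (k : ℝ) * p ≤ u := by
    have : (k : ℝ) * p ≤ (u / p) * p := by nlinarith
    rwa [div_mul_cancel₀ u hp.ne'] at this
  have hk2 : u < ((k : ℝ) + 1) * p := by
    have : (u / p) * p < ((k : ℝ) + 1) * p := by nlinarith
    rwa [div_mul_cancel₀ u hp.ne'] at this
  have hpk : p < (k : ℝ) * (q - p) := lt_of_lt_of_le hpm (by nlinarith)
  have hk3 : u < (k : ℝ) * q := by nlinarith
  obtain ⟨δ, hδ, hball⟩ := Metric.isOpen_iff.mp hU u huU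
  have h1 : p ≤ u / k := (le_div_iff₀ hkpos).mpr (by nlinarith)
  have h2 : u / k ≤ q := (div_le_iff₀ hkpos).mpr (by nlinarith)
  have h3 : (u - δ / 2) / k < u / k := by gcongr; linarith
  have h4 : u / k < (u + δ / 2) / k := by gcongr; linarith
  refine ⟨(k, max p ((u - δ / 2) / k), min q ((u + δ / 2) / k)), ?_, le_max_left _ _, ?_,
    min_le_left _ _, ?_⟩
  · exact_mod_cast (hmn₀.le.trans hkr)
  · exact max_lt (lt_min hpq (h1.trans_lt h4)) (lt_min (h3.trans_le h2) (h3.trans h4))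
  · intro x hx
    apply hball
    rw [Metric.mem_ball, Real.dist_eq]
    have hx1 : (u - δ / 2) / k ≤ x := le_trans (le_max_right _ _) hx.1
    have hx2 : x ≤ (u + δ / 2) / k := hx.2.trans (min_le_right _ _)
    rw [div_le_iff₀ hkpos] at hx1
    rw [le_div_iff₀ hkpos] at hx2
    rw [abs_lt]
    constructor <;> linarith [mul_comm x (k:ℝ), hδ]

private lemma exists_good_point (W : ℕ → Set ℝ) (hWo : ∀ j, IsOpen (W j))
    (hWu : ∀ j (M : ℝ), ∃ u ∈ W j, M < u) :
    ∃ (x : ℝ) (N : ℕ → ℕ), 0 < x ∧ StrictMono N ∧ ∀ j, (N (j + 1) : ℝ) * x ∈ W j := by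
  have key : ∀ (j n₀ : ℕ) (p q : ℝ), 0 < p → p < q →
      ∃ s : ℕ × ℝ × ℝ, n₀ ≤ s.1 ∧ p ≤ s.2.1 ∧ s.2.1 < s.2.2 ∧ s.2.2 ≤ q ∧
        ∀ x ∈ Set.Icc s.2.1 s.2.2, (s.1 : ℝ) * x ∈ W j :=
    fun j => key_interval (W j) (hWo j) (hWu j)
  let T := {s : ℕ × ℝ × ℝ // 0 < s.2.1 ∧ s.2.1 < s.2.2}
  let step : ℕ → T → T := fun j s =>
    ⟨(key j (s.1.1 + 1) s.1.2.1 s.1.2.2 s.2.1 s.2.2).choose,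
      lt_of_lt_of_le s.2.1 (key j (s.1.1 + 1) s.1.2.1 s.1.2.2 s.2.1 s.2.2).choose_spec.2.1,
      (key j (s.1.1 + 1) s.1.2.1 s.1.2.2 s.2.1 s.2.2).choose_spec.2.2.1⟩
  let G : ℕ → T := fun j => Nat.rec ⟨(0, 1, 2), by norm_num⟩ step j
  set N : ℕ → ℕ := fun j => (G j).1.1 with hN
  set P : ℕ → ℝ := fun j => (G j).1.2.1 with hP
  set Q : ℕ → ℝ := fun j => (G j).1.2.2 with hQ
  have hspec : ∀ j, N j + 1 ≤ N (j + 1) ∧ P j ≤ P (j + 1) ∧ P (j + 1) < Q (j + 1) ∧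
      Q (j + 1) ≤ Q j ∧ ∀ x ∈ Set.Icc (P (j + 1)) (Q (j + 1)), (N (j + 1) : ℝ) * x ∈ W j := by
    intro j
    exact (key j ((G j).1.1 + 1) (G j).1.2.1 (G j).1.2.2 (G j).2.1 (G j).2.2).choose_spec
  have hPmono : Monotone P := monotone_nat_of_le_succ fun j => (hspec j).2.1
  have hQanti : Antitone Q := antitone_nat_of_succ_le fun j => (hspec j).2.2.2.1
  have hPQ : ∀ j, P j < Q j := fun j => (G j).2.2
  have hPQ' : ∀ i j, P i ≤ Q j := by
    intro i j
    rcases le_total i j with hij | hij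
    · exact (hPmono hij).trans (hPQ j).le
    · exact (hPQ i).le.trans (hQanti hij)
  have hbdd : BddAbove (Set.range P) := ⟨Q 0, by rintro _ ⟨i, rfl⟩; exact hPQ' i 0⟩
  refine ⟨⨆ j, P j, N, ?_, ?_, ?_⟩
  · exact lt_of_lt_of_le (G 0).2.1 (le_ciSup hbdd 0)
  · exact strictMono_nat_of_lt_succ fun j => Nat.lt_of_succ_le (hspec j).1
  · intro j
    exact (hspec j).2.2.2.2 _ ⟨le_ciSup hbdd (j + 1), ciSup_le fun i => hPQ' i (j + 1)⟩

theorem croft_limit_exists (f : ℝ → ℝ) (hf : ContinuousOn f (Set.Ioi (0:ℝ)))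
    (h : ∀ x > (0:ℝ), ∃ L : ℝ, Filter.Tendsto (fun n : ℕ => f (n * x)) Filter.atTop (nhds L)) :
    ∃ L : ℝ, Filter.Tendsto f Filter.atTop (nhds L) := by
  set u : ℝ → EReal := fun t => (f t : EReal) with hu
  have hBA : liminf u atTop ≤ limsup u atTop := liminf_le_limsup
  rcases eq_or_lt_of_le hBA with hEq | hlt
  · have htends : Tendsto u atTop (𝓝 (limsup u atTop)) := tendsto_of_liminf_eq_limsup hEq rfl
    by_cases hAt : limsup u atTop = ⊤
    · exfalso
      rw [hAt, EReal.tendsto_nhds_top_iff_real] at htends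
      have hT : Tendsto f atTop atTop := tendsto_atTop.mpr fun M =>
        (htends M).mono fun t ht => (EReal.coe_lt_coe_iff.mp ht).le
      obtain ⟨L, hL⟩ := h 1 one_pos
      have hinner : Tendsto (fun n : ℕ => (n : ℝ) * 1) atTop atTop := by
        simpa [mul_one] using tendsto_natCast_atTop_atTop (R := ℝ)
      exact not_tendsto_nhds_of_tendsto_atTop (hT.comp hinner) L hL
    · by_cases hAb : limsup u atTop = ⊥
      · exfalso
        rw [hAb, EReal.tendsto_nhds_bot_iff_real] at htends
        have hT : Tendsto f atTop atBot := tendsto_atBot.mpr fun M =>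
          (htends M).mono fun t ht => (EReal.coe_lt_coe_iff.mp ht).le
        obtain ⟨L, hL⟩ := h 1 one_pos
        have hinner : Tendsto (fun n : ℕ => (n : ℝ) * 1) atTop atTop := by
          simpa [mul_one] using tendsto_natCast_atTop_atTop (R := ℝ)
        exact not_tendsto_nhds_of_tendsto_atBot (hT.comp hinner) L hL
      · refine ⟨(limsup u atTop).toReal, ?_⟩
        rw [← EReal.coe_toReal hAt hAb] at htends
        exact EReal.tendsto_coe.mp htends
  · obtain ⟨y₁, hBy₁, hy₁A⟩ := exists_between hlt
    obtain ⟨y₂, hy₁y₂, hy₂A⟩ := exists_between hy₁A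
    set c := y₁.toReal with hcdef
    set c' := y₂.toReal with hc'def
    have hc : (c : EReal) = y₁ := EReal.coe_toReal (ne_top_of_lt hy₁y₂) (ne_bot_of_gt hBy₁)
    have hc' : (c' : EReal) = y₂ := EReal.coe_toReal (ne_top_of_lt hy₂A) (ne_bot_of_gt hy₁y₂)
    have hcc' : c < c' := by rw [← EReal.coe_lt_coe_iff, hc, hc']; exact hy₁y₂
    set U : Set ℝ := Set.Ioi 0 ∩ f ⁻¹' (Set.Iio c) with hUdef
    set V : Set ℝ := Set.Ioi 0 ∩ f ⁻¹' (Set.Ioi c') with hVdef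
    have hUo : IsOpen U := hf.isOpen_inter_preimage isOpen_Ioi isOpen_Iio
    have hVo : IsOpen V := hf.isOpen_inter_preimage isOpen_Ioi isOpen_Ioi
    have hUf : ∀ M : ℝ, ∃ t ∈ U, M < t := by
      intro M
      have h1 : liminf u atTop < ((c : ℝ) : EReal) := by rw [hc]; exact hBy₁
      have hfreq : ∃ᶠ t in atTop, u t < (c : EReal) :=
        frequently_lt_of_liminf_lt (by isBoundedDefault) h1
      obtain ⟨t, ht, hft⟩ := (frequently_atTop.mp hfreq) (max (M + 1) 1)
      refine ⟨t, ⟨lt_of_lt_of_le one_pos ((le_max_right _ _).trans ht), EReal.coe_lt_coe_iff.mp hft⟩, ?_⟩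
      have := (le_max_left (M + 1) 1).trans ht
      linarith
    have hVf : ∀ M : ℝ, ∃ t ∈ V, M < t := by
      intro M
      have h1 : ((c' : ℝ) : EReal) < limsup u atTop := by rw [hc']; exact hy₂A
      have hfreq : ∃ᶠ t in atTop, (c' : EReal) < u t :=
        frequently_lt_of_lt_limsup (by isBoundedDefault) h1
      obtain ⟨t, ht, hft⟩ := (frequently_atTop.mp hfreq) (max (M + 1) 1)
      refine ⟨t, ⟨lt_of_lt_of_le one_pos ((le_max_right _ _).trans ht), EReal.coe_lt_coe_iff.mp hft⟩, ?_⟩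
      have := (le_max_left (M + 1) 1).trans ht
      linarith
    set W : ℕ → Set ℝ := fun j => if Even j then U else V with hWdef
    have hWo : ∀ j, IsOpen (W j) := by
      intro j; by_cases hj : Even j <;> simp only [hWdef, hj, if_true, if_false] <;>
        [exact hUo; exact hVo]
    have hWu : ∀ j (M : ℝ), ∃ t ∈ W j, M < t := by
      intro j M; by_cases hj : Even j <;> simp only [hWdef, hj, if_true, if_false] <;>
        [exact hUf M; exact hVf M]
    obtain ⟨x, N, hx0, hNmono, hmem⟩ := exists_good_point W hWo hWu
    obtain ⟨L, hL⟩ := h x hx0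
    have hodd : StrictMono (fun k : ℕ => 2 * k + 1) := by intro a b hab; simp only []; omega
    have heven : StrictMono (fun k : ℕ => 2 * k + 2) := by intro a b hab; simp only []; omega
    have hsub1 : Tendsto (fun k : ℕ => f ((N (2 * k + 1) : ℝ) * x)) atTop (𝓝 L) :=
      hL.comp ((hNmono.comp hodd).tendsto_atTop)
    have hsub2 : Tendsto (fun k : ℕ => f ((N (2 * k + 2) : ℝ) * x)) atTop (𝓝 L) :=
      hL.comp ((hNmono.comp heven).tendsto_atTop)
    have hLc : L ≤ c := by
      refine le_of_tendsto hsub1 (Eventually.of_forall fun k => ?_)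
      have := hmem (2 * k)
      rw [hWdef] at this
      simp only [even_two_mul, if_true] at this
      exact this.2.le
    have hLc' : c' ≤ L := by
      refine ge_of_tendsto hsub2 (Eventually.of_forall fun k => ?_)
      have := hmem (2 * k + 1)
      rw [hWdef] at this
      have hodd' : ¬ Even (2 * k + 1) := by simp [Nat.even_add_one, parity_simps]
      simp only [hodd', if_false] at this
      exact this.2.le
    linarith
end

section
/- If f : (0, ∞) → ℝ is continuous and for every x > 0 the sequence f(n·x) converges in the extended reals [-∞, ∞], then f(x) converges in [-∞, ∞] as x → ∞. -/
open Filter Set Topology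

/-- Density of the set of `x` such that some multiple `n*x`, `n ≥ N`, lands in an
unbounded open set `U`, padded with the negative reals. -/
lemma croft_dense (U : Set ℝ) (hU : IsOpen U) (hUb : ∀ M : ℝ, ∃ u ∈ U, M < u) (N : ℕ) :
    Dense ({x : ℝ | ∃ n : ℕ, N ≤ n ∧ (n : ℝ) * x ∈ U} ∪ Set.Iio 0) := by
  rw [dense_iff_inter_open]
  intro W hW hWne
  by_cases hneg : (W ∩ Set.Iio 0).Nonempty
  · obtain ⟨x, hx⟩ := hneg
    exact ⟨x, hx.1, Or.inr hx.2⟩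
  -- W ⊆ Ici 0; find w ∈ W with w > 0
  obtain ⟨w, hw⟩ := hWne
  have hWpos : ∀ y ∈ W, 0 ≤ y := by
    intro y hy
    by_contra hlt
    exact hneg ⟨y, hy, lt_of_not_ge hlt⟩
  obtain ⟨r, hr, hball⟩ := Metric.isOpen_iff.1 hW w hw
  have hwpos : 0 < w := by
    rcases lt_or_eq_of_le (hWpos w hw) with h | h
    · exact h
    · exfalso
      have : -(r/2) ∈ W := by
        apply hball
        simp [Real.dist_eq, ← h, abs_of_nonpos, hr.le]
        rw [abs_of_nonneg (by linarith)]
        linarith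
      have := hWpos _ this
      linarith
  set ε : ℝ := min r w / 2 with hε
  have hεpos : 0 < ε := by positivity
  have hεr : ε < r := by
    have : min r w ≤ r := min_le_left _ _
    simp only [hε]; linarith
  have hεw : ε < w := by
    have : min r w ≤ w := min_le_right _ _
    simp only [hε]; linarith
  set c : ℝ := w - ε with hc
  set d : ℝ := w + ε with hd
  have hcpos : 0 < c := by simp only [hc]; linarith
  have hcd : c < d := by simp only [hc, hd]; linarith
  have hsub : Set.Icc c d ⊆ W := by
    intro y hy
    apply hball
    rw [Metric.mem_ball, Real.dist_eq, abs_lt]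
    constructor
    · simp only [hc] at hy; linarith [hy.1]
    · simp only [hd] at hy; linarith [hy.2]
  -- choose n₀
  set n₀ : ℕ := max N (⌈c / (d - c)⌉₊ + 1) with hn₀
  have hn₀N : N ≤ n₀ := le_max_left _ _
  have hn₀c : c / (d - c) < (n₀ : ℝ) := by
    calc c / (d - c) ≤ (⌈c / (d - c)⌉₊ : ℝ) := Nat.le_ceil _
    _ < (⌈c / (d - c)⌉₊ + 1 : ℕ) := by exact_mod_cast Nat.lt_succ_self _
    _ ≤ (n₀ : ℝ) := by exact_mod_cast le_max_right _ _
  have hn₀pos : 0 < n₀ := lt_of_lt_of_le (Nat.succ_pos _) (le_max_right _ _)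
  obtain ⟨u, huU, hu⟩ := hUb ((n₀ : ℝ) * c)
  have hupos : 0 < u := lt_trans (by positivity) hu
  set n : ℕ := ⌊u / c⌋₊ with hnn
  have hn₀n : n₀ ≤ n := by
    apply Nat.le_floor
    rw [le_div_iff₀ hcpos]
    exact hu.le
  have hnpos : 0 < n := lt_of_lt_of_le hn₀pos hn₀n
  have hnc : (n : ℝ) * c ≤ u := by
    have := Nat.floor_le (a := u / c) (by positivity)
    rw [le_div_iff₀ hcpos, ← hnn] at this
    linarith
  have hund : u < (n : ℝ) * d := by
    have h1 : u / c < (n : ℝ) + 1 := Nat.lt_floor_add_one _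
    rw [div_lt_iff₀ hcpos] at h1
    have h2 : c ≤ (n : ℝ) * (d - c) := by
      calc c ≤ (n₀ : ℝ) * (d - c) := by
              rw [div_lt_iff₀ (by linarith)] at hn₀c; linarith
      _ ≤ (n : ℝ) * (d - c) := by
              apply mul_le_mul_of_nonneg_right _ (by linarith)
              exact_mod_cast hn₀n
    nlinarith
  refine ⟨u / n, hsub ⟨?_, ?_⟩, Or.inl ⟨n, le_trans hn₀N hn₀n, ?_⟩⟩
  · rw [le_div_iff₀ (by exact_mod_cast hnpos)]
    linarith
  · rw [div_le_iff₀ (by exact_mod_cast hnpos)]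
    linarith [hund.le]
  · have : (n : ℝ) ≠ 0 := by exact_mod_cast hnpos.ne'
    rw [mul_div_cancel₀ _ this]
    exact huU

/-- From two open unbounded sets, find a common point whose multiples hit both frequently. -/
lemma croft_key (U V : Set ℝ) (hU : IsOpen U) (hV : IsOpen V)
    (hUb : ∀ M : ℝ, ∃ u ∈ U, M < u) (hVb : ∀ M : ℝ, ∃ u ∈ V, M < u) :
    ∃ x > (0:ℝ), (∃ᶠ n : ℕ in atTop, (n : ℝ) * x ∈ U) ∧
      (∃ᶠ n : ℕ in atTop, (n : ℝ) * x ∈ V) := by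
  set A : ℕ × Bool → Set ℝ := fun p =>
    {x : ℝ | ∃ n : ℕ, p.1 ≤ n ∧ (n : ℝ) * x ∈ (if p.2 then U else V)} ∪ Set.Iio 0 with hA
  have hopen : ∀ p, IsOpen (A p) := by
    rintro ⟨N, b⟩
    apply IsOpen.union _ isOpen_Iio
    have heq : {x : ℝ | ∃ n : ℕ, N ≤ n ∧ (n : ℝ) * x ∈ (if b then U else V)} =
        ⋃ n ∈ {n : ℕ | N ≤ n}, (fun x : ℝ => (n : ℝ) * x) ⁻¹' (if b then U else V) := by
      ext x; simp [Set.mem_iUnion]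
    rw [heq]
    apply isOpen_biUnion
    intro n _
    cases b
    · exact hV.preimage (continuous_const.mul continuous_id)
    · exact hU.preimage (continuous_const.mul continuous_id)
  have hdense : ∀ p, Dense (A p) := by
    rintro ⟨N, b⟩
    cases b
    · exact croft_dense V hV hVb N
    · exact croft_dense U hU hUb N
  have hD : Dense (⋂ p, A p) := dense_iInter_of_isOpen hopen hdense
  obtain ⟨x, hx1, hx2⟩ := hD.inter_open_nonempty (Set.Ioi 0) isOpen_Ioi ⟨1, by norm_num⟩
  rw [Set.mem_iInter] at hx2
  have hxpos : (0:ℝ) < x := hx1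
  refine ⟨x, hxpos, ?_, ?_⟩
  · rw [frequently_atTop]
    intro N
    have := hx2 (N, true)
    rcases this with h | h
    · obtain ⟨n, hn1, hn2⟩ := h
      exact ⟨n, hn1, by simpa using hn2⟩
    · exact absurd h (by simpa using not_lt.2 hxpos.le)
  · rw [frequently_atTop]
    intro N
    have := hx2 (N, false)
    rcases this with h | h
    · obtain ⟨n, hn1, hn2⟩ := h
      exact ⟨n, hn1, by simpa using hn2⟩
    · exact absurd h (by simpa using not_lt.2 hxpos.le)

theorem croft_ereal (f : ℝ → ℝ) (hf : ContinuousOn f (Set.Ioi (0:ℝ)))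
    (h : ∀ x > (0:ℝ), ∃ L : EReal,
      Filter.Tendsto (fun n : ℕ => (f (n * x) : EReal)) Filter.atTop (nhds L)) :
    ∃ L : EReal, Filter.Tendsto (fun x => (f x : EReal)) Filter.atTop (nhds L) := by
  by_contra hcon
  push_neg at hcon
  set g : ℝ → EReal := fun x => (f x : EReal) with hg
  have hne : liminf g atTop ≠ limsup g atTop := by
    intro heq
    exact hcon _ (tendsto_of_liminf_eq_limsup heq rfl)
  have hlt : liminf g atTop < limsup g atTop :=
    lt_of_le_of_ne (liminf_le_limsup) hne
  obtain ⟨a, ha1, ha2⟩ := EReal.exists_between_coe_real hlt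
  obtain ⟨b, hb1, hb2⟩ := EReal.exists_between_coe_real ha2
  have hab : a < b := by exact_mod_cast hb1
  -- U = {x > 0 | f x < a}, V = {x > 0 | f x > b}
  set U : Set ℝ := Set.Ioi 0 ∩ f ⁻¹' (Set.Iio a) with hUdef
  set V : Set ℝ := Set.Ioi 0 ∩ f ⁻¹' (Set.Ioi b) with hVdef
  have hUopen : IsOpen U := hf.isOpen_inter_preimage isOpen_Ioi isOpen_Iio
  have hVopen : IsOpen V := hf.isOpen_inter_preimage isOpen_Ioi isOpen_Ioi
  have hUfreq : ∃ᶠ x : ℝ in atTop, g x < (a : EReal) :=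
    frequently_lt_of_liminf_lt (by isBoundedDefault) ha1
  have hVfreq : ∃ᶠ x : ℝ in atTop, (b : EReal) < g x :=
    frequently_lt_of_lt_limsup (by isBoundedDefault) hb2
  have hUb : ∀ M : ℝ, ∃ u ∈ U, M < u := by
    intro M
    have := (hUfreq.and_eventually (eventually_gt_atTop (max M 0))).exists
    obtain ⟨u, hu1, hu2⟩ := this
    refine ⟨u, ⟨lt_of_le_of_lt (le_max_right _ _) hu2, ?_⟩, lt_of_le_of_lt (le_max_left _ _) hu2⟩
    simpa [hg, EReal.coe_lt_coe_iff] using hu1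
  have hVb : ∀ M : ℝ, ∃ u ∈ V, M < u := by
    intro M
    have := (hVfreq.and_eventually (eventually_gt_atTop (max M 0))).exists
    obtain ⟨u, hu1, hu2⟩ := this
    refine ⟨u, ⟨lt_of_le_of_lt (le_max_right _ _) hu2, ?_⟩, lt_of_le_of_lt (le_max_left _ _) hu2⟩
    simpa [hg, EReal.coe_lt_coe_iff] using hu1
  obtain ⟨x, hxpos, hfU, hfV⟩ := croft_key U V hUopen hVopen hUb hVb
  obtain ⟨L, hL⟩ := h x hxpos
  -- frequently f (n*x) < a, so L ≤ a
  have hLa : L ≤ (a : EReal) := by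
    by_contra hlt'
    push_neg at hlt'
    have hev : ∀ᶠ n : ℕ in atTop, (a : EReal) < (f (n * x) : EReal) :=
      hL.eventually_const_lt hlt'
    have := (hfU.and_eventually hev).exists
    obtain ⟨n, hn1, hn2⟩ := this
    have : f ((n : ℝ) * x) < a := hn1.2
    rw [EReal.coe_lt_coe_iff] at hn2
    linarith
  have hLb : (b : EReal) ≤ L := by
    by_contra hlt'
    push_neg at hlt'
    have hev : ∀ᶠ n : ℕ in atTop, (f (n * x) : EReal) < (b : EReal) :=
      hL.eventually_lt_const hlt'
    have := (hfV.and_eventually hev).exists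
    obtain ⟨n, hn1, hn2⟩ := this
    have : b < f ((n : ℝ) * x) := hn1.2
    rw [EReal.coe_lt_coe_iff] at hn2
    linarith
  have : (b : EReal) ≤ (a : EReal) := le_trans hLb hLa
  rw [EReal.coe_le_coe_iff] at this
  linarith
end

section
/- If f : (0, ∞) → ℝ is continuous, s ∈ ℝ, and for every x > 0, limsup_{n→∞} f(n·x) ≤ s, then limsup_{x→∞} f(x) ≤ s. -/
open Filter Set

theorem croft_limsup_le (f : ℝ → ℝ) (hf : ContinuousOn f (Set.Ioi (0:ℝ))) (s : ℝ)
    (h : ∀ x > (0:ℝ),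
      Filter.limsup (fun n : ℕ => (f (n * x) : EReal)) Filter.atTop ≤ (s : EReal)) :
    Filter.limsup (fun x => (f x : EReal)) Filter.atTop ≤ (s : EReal) := by
  have key : ∀ r : ℝ, (s:EReal) < (r:EReal) → ∀ᶠ y in atTop, f y ≤ r := by
    intro r hr
    set E : ℕ → Set ℝ := fun n => {x : ℝ | ∀ m : ℕ, n + 1 ≤ m → f (m * (1 + |x|)) ≤ r}
      with hE
    have hpos : ∀ x : ℝ, (0:ℝ) < 1 + |x| := fun x => by positivity
    have hclosed : ∀ n, IsClosed (E n) := by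
      intro n
      have hrepr : E n = ⋂ m : ℕ, {x : ℝ | n + 1 ≤ m → f (m * (1 + |x|)) ≤ r} := by
        ext x; simp [hE, Set.mem_iInter]
      rw [hrepr]
      refine isClosed_iInter fun m => ?_
      by_cases hm : n + 1 ≤ m
      · have hcont : Continuous fun x : ℝ => f (m * (1 + |x|)) := by
          apply hf.comp_continuous
          · continuity
          · intro x
            have h1 : (1:ℝ) ≤ m := by exact_mod_cast Nat.one_le_iff_ne_zero.mpr (by omega)
            have := hpos x
            show (0:ℝ) < m * (1 + |x|)
            nlinarith
        simpa only [hm, true_implies] using isClosed_le hcont continuous_const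
      · simp [hm]
    have hcover : (⋃ n, E n) = univ := by
      ext x
      simp only [mem_iUnion, mem_univ, iff_true]
      have hx := h (1 + |x|) (hpos x)
      have hev : ∀ᶠ m : ℕ in atTop, (f (m * (1 + |x|)) : EReal) < (r : EReal) :=
        Filter.eventually_lt_of_limsup_lt (lt_of_le_of_lt hx hr)
      obtain ⟨N, hN⟩ := eventually_atTop.1 hev
      refine ⟨N, fun m hm => ?_⟩
      have := hN m (by omega)
      exact_mod_cast this.le
    obtain ⟨n, x₀, hx₀⟩ := nonempty_interior_of_iUnion_of_closed hclosed hcover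
    obtain ⟨δ, hδ, hball⟩ := Metric.isOpen_iff.1 isOpen_interior x₀ hx₀
    have hsub : Metric.ball x₀ δ ⊆ E n := hball.trans interior_subset
    set a : ℝ := 1 + |x₀| with ha
    have ha1 : (1:ℝ) ≤ a := by rw [ha]; linarith [abs_nonneg x₀]
    have hapos : (0:ℝ) < a := lt_of_lt_of_le one_pos ha1
    -- every t ∈ [a, a + δ) is of the form 1 + |x| with x ∈ ball x₀ δ
    have hIco : ∀ t : ℝ, a ≤ t → t < a + δ → ∀ m : ℕ, n + 1 ≤ m → f (m * t) ≤ r := by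
      intro t ht1 ht2 m hm
      set u : ℝ := t - 1 with hu
      have hu0 : |x₀| ≤ u := by simp [hu, ha] at ht1 ⊢; linarith
      have hu2 : u < |x₀| + δ := by simp [hu, ha] at ht2 ⊢; linarith
      set x : ℝ := if 0 ≤ x₀ then u else -u with hxdef
      have habs : |x| = u := by
        have hunn : 0 ≤ u := le_trans (abs_nonneg _) hu0
        by_cases h0 : 0 ≤ x₀ <;> simp [hxdef, h0, abs_of_nonneg hunn, abs_of_nonpos, neg_nonpos.2 hunn]
      have hmem : x ∈ Metric.ball x₀ δ := by
        rw [Metric.mem_ball, Real.dist_eq]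
        by_cases h0 : 0 ≤ x₀
        · have : |x₀| = x₀ := abs_of_nonneg h0
          rw [hxdef, if_pos h0, abs_of_nonneg (by linarith [hu0, this] : (0:ℝ) ≤ u - x₀)]
          linarith [hu2, this.symm.le]
        · push_neg at h0
          have hax : |x₀| = -x₀ := abs_of_neg h0
          rw [hxdef, if_neg (not_le.2 h0)]
          have h1 : -u - x₀ ≤ 0 := by linarith [hu0, hax]
          rw [abs_of_nonpos h1]
          linarith [hu2]
      have := hsub hmem m hm
      have ht : 1 + |x| = t := by rw [habs]; simp [hu]
      rwa [ht] at this
    -- choose M large enough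
    set M : ℕ := max (n + 1) (⌈a / δ⌉₊ + 1) with hM
    have hM1 : n + 1 ≤ M := le_max_left _ _
    have hM2 : a ≤ (M:ℝ) * δ := by
      have h1 : a / δ ≤ (⌈a / δ⌉₊ : ℝ) := Nat.le_ceil _
      have h2 : (⌈a / δ⌉₊ : ℝ) ≤ (M:ℝ) := by
        exact_mod_cast le_trans (Nat.le_succ _) (le_max_right (n+1) _)
      calc a = (a / δ) * δ := by field_simp
        _ ≤ (M:ℝ) * δ := by nlinarith
    filter_upwards [eventually_ge_atTop ((M:ℝ) * a)] with y hy
    set m : ℕ := ⌊y / a⌋₊ with hm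
    have hMpos : 0 < M := lt_of_lt_of_le (Nat.succ_pos n) hM1
    have hya : (M:ℝ) ≤ y / a := (le_div_iff₀ hapos).2 (by linarith)
    have hMm : M ≤ m := Nat.le_floor hya
    have hmpos : (0:ℝ) < m := by
      exact_mod_cast lt_of_lt_of_le hMpos hMm
    have hma : (m:ℝ) * a ≤ y := by
      have h1 : (m:ℝ) ≤ y / a := Nat.floor_le (le_trans (by exact_mod_cast hMpos.le) hya)
      calc (m:ℝ) * a ≤ (y / a) * a := by nlinarith
        _ = y := by field_simp
    have hy2 : y < ((m:ℝ) + 1) * a := by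
      have h1 : y / a < (m:ℝ) + 1 := Nat.lt_floor_add_one _
      calc y = (y / a) * a := by field_simp
        _ < ((m:ℝ) + 1) * a := by nlinarith
    have hmd : a ≤ (m:ℝ) * δ := by
      have : (M:ℝ) ≤ (m:ℝ) := by exact_mod_cast hMm
      nlinarith [hδ]
    set t : ℝ := y / m with htdef
    have ht1 : a ≤ t := (le_div_iff₀ hmpos).2 (by linarith)
    have ht2 : t < a + δ := by
      rw [htdef, div_lt_iff₀ hmpos]
      nlinarith
    have hres := hIco t ht1 ht2 m (le_trans hM1 hMm)
    have : (m:ℝ) * t = y := by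
      rw [htdef]; field_simp
    rwa [this] at hres
  refine le_of_forall_gt_imp_ge_of_dense fun c hc => ?_
  obtain ⟨r, hr1, hr2⟩ := EReal.exists_between_coe_real hc
  have hev : ∀ᶠ y in atTop, (fun x => (f x : EReal)) y ≤ (r : EReal) := by
    filter_upwards [key r hr1] with y hy
    exact_mod_cast hy
  exact le_trans (Filter.limsup_le_of_le (by isBoundedDefault) hev) hr2.le
end

section
/- If f : (0, ∞) → ℝ is continuous, s ∈ ℝ, and for every x > 0, limsup_{n→∞} f(n·x) = s, then limsup_{x→∞} f(x) = s. -/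
open Filter Set Topology

theorem croft_limsup_eq (f : ℝ → ℝ) (hf : ContinuousOn f (Set.Ioi (0:ℝ))) (s : ℝ)
    (h : ∀ x > (0:ℝ),
      Filter.limsup (fun n : ℕ => (f (n * x) : EReal)) Filter.atTop = (s : EReal)) :
    Filter.limsup (fun x => (f x : EReal)) Filter.atTop = (s : EReal) := by
  -- Key claim: for every ε > 0, eventually f y ≤ s + ε.
  have key_le : ∀ ε : ℝ, 0 < ε → ∀ᶠ y in atTop, f y ≤ s + ε := by
    intro ε hε
    -- the closed sets
    set S : ℕ → Set ℝ := fun n => {x | x ∈ Ici (1:ℝ) ∧ f (n * x) ≤ s + ε} with hSdef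
    set E : ℕ → Set ℝ := fun N => ⋂ n ∈ Ici (N+1), S n with hEdef
    have hSclosed : ∀ n : ℕ, 1 ≤ n → IsClosed (S n) := by
      intro n hn
      have hmaps : MapsTo (fun x : ℝ => (n : ℝ) * x) (Ici (1:ℝ)) (Ioi (0:ℝ)) := by
        intro x hx
        have hn1 : (1:ℝ) ≤ (n:ℝ) := by exact_mod_cast hn
        have h2 : (1:ℝ) ≤ (n:ℝ) * x := by nlinarith [mem_Ici.1 hx]
        have : (0:ℝ) < (n:ℝ) * x := by linarith
        simpa using this
      have hcont : ContinuousOn (fun x : ℝ => f ((n:ℝ) * x)) (Ici (1:ℝ)) :=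
        hf.comp ((continuous_const.mul continuous_id).continuousOn) hmaps
      have : S n = Ici (1:ℝ) ∩ (fun x : ℝ => f ((n:ℝ) * x)) ⁻¹' (Iic (s + ε)) := by
        ext x; simp [hSdef]
      rw [this]
      exact hcont.preimage_isClosed_of_isClosed isClosed_Ici isClosed_Iic
    have hEclosed : ∀ N, IsClosed (E N) := by
      intro N
      exact isClosed_biInter fun n hn =>
        hSclosed n (le_trans (Nat.le_add_left 1 N) hn)
    -- Baire category on the subtype Ici 1
    haveI : CompleteSpace (Ici (1:ℝ)) := isClosed_Ici.completeSpace_coe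
    have hcover : ⋃ N, (Subtype.val ⁻¹' E N : Set (Ici (1:ℝ))) = univ := by
      ext x
      simp only [mem_iUnion, mem_univ, iff_true, mem_preimage]
      have hx0 : (0:ℝ) < x.1 := lt_of_lt_of_le one_pos x.2
      have hls := h x.1 hx0
      have hlt : limsup (fun n : ℕ => (f (n * x.1) : EReal)) atTop
          < ((s + ε : ℝ) : EReal) := by
        rw [hls]; exact_mod_cast (by linarith : s < s + ε)
      have hev := eventually_lt_of_limsup_lt hlt
      rw [eventually_atTop] at hev
      obtain ⟨N, hN⟩ := hev
      refine ⟨N, ?_⟩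
      simp only [hEdef, mem_iInter, mem_Ici]
      intro n hn
      refine ⟨x.2, ?_⟩
      have := hN n (le_trans (Nat.le_add_right N 1) hn)
      exact_mod_cast this.le
    obtain ⟨N, hNint⟩ := nonempty_interior_of_iUnion_of_closed
      (f := fun N => (Subtype.val ⁻¹' E N : Set (Ici (1:ℝ))))
      (fun N => (hEclosed N).preimage continuous_subtype_val) hcover
    obtain ⟨x, hx⟩ := hNint
    -- extract an honest interval [c, d] ⊆ E N
    obtain ⟨U, hUopen, hUeq⟩ := isOpen_induced_iff.1
      (isOpen_interior (s := (Subtype.val ⁻¹' E N : Set (Ici (1:ℝ)))))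
    have hxU : (x : ℝ) ∈ U := by rw [← hUeq] at hx; exact hx
    have hUsub : ∀ y : ℝ, y ∈ U → 1 ≤ y → y ∈ E N := by
      intro y hy h1y
      have : (⟨y, h1y⟩ : Ici (1:ℝ)) ∈ Subtype.val ⁻¹' U := hy
      rw [hUeq] at this
      have h3 : (⟨y, h1y⟩ : Ici (1:ℝ)) ∈ Subtype.val ⁻¹' E N :=
        interior_subset (s := (Subtype.val ⁻¹' E N : Set (Ici (1:ℝ)))) this
      exact h3
    obtain ⟨δ, hδpos, hball⟩ := Metric.isOpen_iff.1 hUopen _ hxU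
    set c : ℝ := (x : ℝ) with hcdef
    set d : ℝ := c + δ / 2 with hddef
    have hc1 : (1:ℝ) ≤ c := x.2
    have hcd : c < d := by simp [hddef]; linarith
    have hIcc : ∀ y ∈ Icc c d, y ∈ E N := by
      intro y hy
      apply hUsub y _ (le_trans hc1 hy.1)
      apply hball
      rw [Metric.mem_ball, Real.dist_eq, abs_lt]
      constructor <;> [linarith [hy.1]; skip]
      have := hy.2
      rw [hddef] at this
      linarith
    -- the tail bound
    set n₀ : ℕ := max (N + 1) (⌈c / (d - c)⌉₊ + 1) with hn₀def
    refine eventually_atTop.2 ⟨(n₀ : ℝ) * c, ?_⟩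
    intro y hy
    have hcpos : (0:ℝ) < c := lt_of_lt_of_le one_pos hc1
    have hn₀pos : 1 ≤ n₀ := le_trans (Nat.le_add_left 1 N) (le_max_left _ _)
    have hypos : (0:ℝ) < y := by
      have : (1:ℝ) ≤ (n₀:ℝ) := by exact_mod_cast hn₀pos
      nlinarith
    set n : ℕ := ⌊y / c⌋₊ with hndef
    have hyc : (n₀ : ℝ) ≤ y / c := (le_div_iff₀ hcpos).2 hy
    have hn₀n : n₀ ≤ n := Nat.le_floor hyc
    have hnpos : 0 < n := lt_of_lt_of_le hn₀pos hn₀n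
    have hnR : (0:ℝ) < (n:ℝ) := by exact_mod_cast hnpos
    have hfloor_le : (n : ℝ) ≤ y / c := Nat.floor_le (by positivity)
    have hlt_floor : y / c < (n : ℝ) + 1 := Nat.lt_floor_add_one _
    -- x' := y / n lies in [c, d]
    have hy' : (n:ℝ) * c ≤ y := (le_div_iff₀ hcpos).1 hfloor_le
    have hx'c : c ≤ y / n := by
      rw [le_div_iff₀ hnR]
      calc c * (n:ℝ) = (n:ℝ) * c := mul_comm _ _
        _ ≤ y := hy'
    have hceil : c / (d - c) ≤ (n : ℝ) := by
      have h1 : (⌈c / (d - c)⌉₊ : ℝ) ≤ (n₀:ℝ) := by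
        exact_mod_cast le_trans (Nat.le_succ _) (le_max_right (N+1) _)
      have h2 : (n₀ : ℝ) ≤ (n:ℝ) := by exact_mod_cast hn₀n
      calc c / (d - c) ≤ (⌈c / (d - c)⌉₊ : ℝ) := Nat.le_ceil _
        _ ≤ (n:ℝ) := le_trans h1 h2
    have hsucc : ((n:ℝ) + 1) * c ≤ (n:ℝ) * d := by
      have hdc : (0:ℝ) < d - c := by linarith
      have : c ≤ (n:ℝ) * (d - c) := by
        rw [div_le_iff₀ hdc] at hceil; linarith
      nlinarith
    have hx'd : y / n ≤ d := by
      rw [div_le_iff₀ hnR]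
      have hylt : y < ((n:ℝ) + 1) * c := (div_lt_iff₀ hcpos).1 hlt_floor
      have : y < (n:ℝ) * d := lt_of_lt_of_le hylt hsucc
      linarith [mul_comm (n:ℝ) d]
    have hmem : y / n ∈ E N := hIcc _ ⟨hx'c, hx'd⟩
    simp only [hEdef, mem_iInter, mem_Ici] at hmem
    have := (hmem n (le_trans (le_max_left _ _) hn₀n)).2
    have heq : (n:ℝ) * (y / n) = y := by field_simp
    rwa [heq] at this
  -- now conclude
  refine le_antisymm ?_ ?_
  · -- limsup ≤ s
    by_contra hcon
    push_neg at hcon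
    obtain ⟨c, hc1, hc2⟩ := EReal.exists_between_coe_real hcon
    have hsc : s < c := by exact_mod_cast hc1
    have : limsup (fun x => (f x : EReal)) atTop ≤ (c : EReal) := by
      apply limsup_le_of_le (by isBoundedDefault)
      filter_upwards [key_le (c - s) (by linarith)] with y hy
      have : f y ≤ c := by linarith
      exact_mod_cast this
    exact absurd hc2 (not_lt.2 this)
  · -- s ≤ limsup
    have h1 := h 1 one_pos
    have hmap : map (fun n : ℕ => (n : ℝ)) atTop ≤ (atTop : Filter ℝ) :=
      tendsto_natCast_atTop_atTop
    calc (s : EReal) = limsup (fun n : ℕ => (f (n * 1) : EReal)) atTop := h1.symm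
      _ = limsup ((fun x : ℝ => (f x : EReal)) ∘ (fun n : ℕ => (n:ℝ))) atTop := by
          simp [Function.comp_def]
      _ = limsup (fun x : ℝ => (f x : EReal)) (map (fun n : ℕ => (n:ℝ)) atTop) := by
          rw [Filter.limsup, Filter.limsup, Filter.map_map]
      _ ≤ limsup (fun x : ℝ => (f x : EReal)) atTop :=
          limsup_le_limsup_of_le hmap
end

section
/- If f : (0, ∞) → ℝ is continuous and s satisfies liminf_{x→∞} f(x) ≤ s ≤ limsup_{x→∞} f(x), then there exist x > 0 and a strictly increasing sequence (k_n) of positive integers such that f(k_n · x) → s. -/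
open Filter

lemma croft_near (f : ℝ → ℝ) (hf : ContinuousOn f (Set.Ioi (0:ℝ))) (s : ℝ)
    (h1 : Filter.liminf (fun x => (f x : EReal)) Filter.atTop ≤ (s : EReal))
    (h2 : (s : EReal) ≤ Filter.limsup (fun x => (f x : EReal)) Filter.atTop)
    (ε : ℝ) (hε : 0 < ε) (A : ℝ) :
    ∃ a b : ℝ, A < a ∧ a < b ∧ ∀ y ∈ Set.Icc a b, |f y - s| < ε := by
  have hfreq1 : ∃ᶠ x in atTop, s - ε < f x := by
    by_contra h
    simp only [Filter.not_frequently, not_lt] at h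
    have hle : Filter.limsup (fun x => (f x : EReal)) Filter.atTop ≤ ((s - ε : ℝ) : EReal) :=
      Filter.limsup_le_of_le (by isBoundedDefault)
        (h.mono fun x hx => EReal.coe_le_coe_iff.mpr hx)
    have : (s : EReal) ≤ ((s - ε : ℝ) : EReal) := le_trans h2 hle
    have : s ≤ s - ε := EReal.coe_le_coe_iff.mp this
    linarith
  have hfreq2 : ∃ᶠ x in atTop, f x < s + ε := by
    by_contra h
    simp only [Filter.not_frequently, not_lt] at h
    have hle : ((s + ε : ℝ) : EReal) ≤ Filter.liminf (fun x => (f x : EReal)) Filter.atTop :=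
      Filter.le_liminf_of_le (by isBoundedDefault)
        (h.mono fun x hx => EReal.coe_le_coe_iff.mpr hx)
    have : ((s + ε : ℝ) : EReal) ≤ (s : EReal) := le_trans hle h1
    have : s + ε ≤ s := EReal.coe_le_coe_iff.mp this
    linarith
  obtain ⟨y1, hy1A, hy1⟩ := Filter.frequently_atTop.mp hfreq1 (max A 1 + 1)
  obtain ⟨y2, hy2A, hy2⟩ := Filter.frequently_atTop.mp hfreq2 y1
  have hmax1 : (1:ℝ) ≤ max A 1 := le_max_right A 1
  have hmaxA : A ≤ max A 1 := le_max_left A 1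
  have hy1pos : (0:ℝ) < y1 := by linarith
  have hy1A' : A < y1 := by linarith
  -- find y with A < y, 0 < y, |f y - s| < ε
  have hmain : ∃ y : ℝ, A < y ∧ 0 < y ∧ |f y - s| < ε := by
    by_cases hc1 : f y1 < s + ε
    · exact ⟨y1, hy1A', hy1pos, abs_sub_lt_iff.mpr ⟨by linarith, by linarith⟩⟩
    · push_neg at hc1
      by_cases hc2 : s - ε < f y2
      · exact ⟨y2, lt_of_lt_of_le hy1A' hy2A, lt_of_lt_of_le hy1pos hy2A,
          abs_sub_lt_iff.mpr ⟨by linarith, by linarith⟩⟩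
      · push_neg at hc2
        have hsub : Set.Icc y1 y2 ⊆ Set.Ioi (0:ℝ) := fun z hz => lt_of_lt_of_le hy1pos hz.1
        have hivt := intermediate_value_Icc' hy2A (hf.mono hsub)
        have hs : s ∈ Set.Icc (f y2) (f y1) := ⟨by linarith, by linarith⟩
        obtain ⟨y, hyI, hyf⟩ := hivt hs
        exact ⟨y, lt_of_lt_of_le hy1A' hyI.1, lt_of_lt_of_le hy1pos hyI.1,
          by rw [hyf]; simpa using hε⟩
  obtain ⟨y, hyA, hy0, hyf⟩ := hmain
  have hca : ContinuousAt f y := hf.continuousAt (isOpen_Ioi.mem_nhds hy0)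
  have habs : ContinuousAt (fun z => |f z - s|) y := (hca.sub continuousAt_const).abs
  have hev : ∀ᶠ z in nhds y, |f z - s| < ε := habs.eventually_lt continuousAt_const hyf
  obtain ⟨δ, hδ, hball⟩ := Metric.eventually_nhds_iff.mp hev
  refine ⟨y, y + δ/2, hyA, by linarith, fun z hz => hball ?_⟩
  rw [Real.dist_eq, abs_sub_lt_iff]
  constructor <;> [linarith [hz.2]; linarith [hz.1]]


lemma croft_step (f : ℝ → ℝ) (s : ℝ)
    (hnear : ∀ ε : ℝ, 0 < ε → ∀ A : ℝ, ∃ a b : ℝ, A < a ∧ a < b ∧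
      ∀ y ∈ Set.Icc a b, |f y - s| < ε)
    (c d : ℝ) (K : ℕ) (ε : ℝ) (hε : 0 < ε) (hc : 0 < c) (hcd : c < d) :
    ∃ c' d' : ℝ, ∃ k : ℕ, c ≤ c' ∧ c' < d' ∧ d' ≤ d ∧ K < k ∧
      ∀ x ∈ Set.Icc c' d', |f (k * x) - s| < ε := by
  set m : ℝ := (c + d) / 2 with hm
  have hcm : c < m := by rw [hm]; linarith
  have hmd : m < d := by rw [hm]; linarith
  have hm0 : 0 < m := lt_trans hc hcm
  obtain ⟨a, b, hAa, hab, hI⟩ := hnear ε hε (max (K * d) (max (2 * m ^ 2 / (d - c)) m))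
  have hKda : (K : ℝ) * d < a := lt_of_le_of_lt (le_max_left _ _) hAa
  have h2m : 2 * m ^ 2 / (d - c) < a :=
    lt_of_le_of_lt (le_trans (le_max_left _ _) (le_max_right _ _)) hAa
  have hma : m < a := lt_of_le_of_lt (le_trans (le_max_right _ _) (le_max_right _ _)) hAa
  have ha0 : 0 < a := lt_trans hm0 hma
  have h2m' : 2 * m ^ 2 < a * (d - c) := by
    rw [div_lt_iff₀ (by linarith)] at h2m; linarith
  set k : ℕ := ⌈a / m⌉₊ with hk
  have hk1 : a / m ≤ (k : ℝ) := Nat.le_ceil _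
  have hk2 : (k : ℝ) < a / m + 1 := Nat.ceil_lt_add_one (by positivity)
  have hk0R : (0:ℝ) < (k : ℝ) := lt_of_lt_of_le (by positivity) hk1
  have hakm : a ≤ (k : ℝ) * m := by rw [div_le_iff₀ hm0] at hk1; linarith
  have hkm : (k : ℝ) * m < a + m := by
    have : (k : ℝ) * m < (a / m + 1) * m := by
      exact mul_lt_mul_of_pos_right hk2 hm0
    rw [add_mul, div_mul_cancel₀ _ (ne_of_gt hm0)] at this; linarith
  -- K < k
  have hKk : K < k := by
    have : (K : ℝ) * m < (k : ℝ) * m := by nlinarith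
    have := lt_of_mul_lt_mul_right this hm0.le
    exact_mod_cast this
  -- c < a / k
  have hckam : c * ((k:ℝ) * m) < a * m := by nlinarith
  have hcak : c < a / (k : ℝ) := by
    rw [lt_div_iff₀ hk0R]
    exact lt_of_mul_lt_mul_right (by nlinarith [hckam]) hm0.le
  have hakm' : a / (k : ℝ) ≤ m := by rw [div_le_iff₀ hk0R]; linarith
  refine ⟨a / k, min (b / k) d, k, le_of_lt hcak, ?_, min_le_right _ _, hKk, ?_⟩
  · exact lt_min ((div_lt_div_iff_of_pos_right hk0R).mpr hab) (lt_of_le_of_lt hakm' hmd)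
  · intro x hx
    have hx1 : a ≤ (k : ℝ) * x := by
      have := hx.1; rw [div_le_iff₀ hk0R] at this; linarith
    have hx2 : (k : ℝ) * x ≤ b := by
      have := le_trans hx.2 (min_le_left _ _)
      rw [le_div_iff₀ hk0R] at this; linarith
    exact hI _ ⟨hx1, hx2⟩


theorem croft_intermediate (f : ℝ → ℝ) (hf : ContinuousOn f (Set.Ioi (0:ℝ))) (s : ℝ)
    (h1 : Filter.liminf (fun x => (f x : EReal)) Filter.atTop ≤ (s : EReal))
    (h2 : (s : EReal) ≤ Filter.limsup (fun x => (f x : EReal)) Filter.atTop) :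
    ∃ x > (0:ℝ), ∃ k : ℕ → ℕ, StrictMono k ∧ (∀ n, 0 < k n) ∧
      Filter.Tendsto (fun n => f (k n * x)) Filter.atTop (nhds s) := by
  have hnear := croft_near f hf s h1 h2
  have hstep : ∀ (n : ℕ) (p : ℝ × ℝ × ℕ), ∃ q : ℝ × ℝ × ℕ,
      0 < p.1 → p.1 < p.2.1 →
        (p.1 ≤ q.1 ∧ q.1 < q.2.1 ∧ q.2.1 ≤ p.2.1 ∧ p.2.2 < q.2.2 ∧
          ∀ x ∈ Set.Icc q.1 q.2.1, |f ((q.2.2 : ℝ) * x) - s| < 1 / (n + 1)) := by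
    intro n p
    by_cases h : 0 < p.1 ∧ p.1 < p.2.1
    · obtain ⟨c', d', k, ha, hb, hc, hd, he⟩ :=
        croft_step f s hnear p.1 p.2.1 p.2.2 (1 / (n + 1)) (by positivity) h.1 h.2
      exact ⟨(c', d', k), fun _ _ => ⟨ha, hb, hc, hd, he⟩⟩
    · exact ⟨p, fun ha hb => absurd ⟨ha, hb⟩ h⟩
  choose F hF using hstep
  set T : ℕ → ℝ × ℝ × ℕ := fun n => Nat.rec ((1:ℝ), (2:ℝ), (0:ℕ)) (fun n p => F n p) n with hT
  have hinv : ∀ n, 0 < (T n).1 ∧ (T n).1 < (T n).2.1 := by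
    intro n
    induction n with
    | zero => exact ⟨one_pos, one_lt_two⟩
    | succ n ih =>
      obtain ⟨ha, hb, _, _, _⟩ := hF n (T n) ih.1 ih.2
      exact ⟨lt_of_lt_of_le ih.1 ha, hb⟩
  have hchain : ∀ n, (T n).1 ≤ (T (n+1)).1 ∧ (T (n+1)).2.1 ≤ (T n).2.1 ∧
      (T n).2.2 < (T (n+1)).2.2 ∧
      ∀ x ∈ Set.Icc (T (n+1)).1 (T (n+1)).2.1,
        |f (((T (n+1)).2.2 : ℝ) * x) - s| < 1 / (n + 1) := by
    intro n
    obtain ⟨ha, hb, hc, hd, he⟩ := hF n (T n) (hinv n).1 (hinv n).2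
    exact ⟨ha, hc, hd, he⟩
  set c : ℕ → ℝ := fun n => (T n).1 with hcdef
  set d : ℕ → ℝ := fun n => (T n).2.1 with hddef
  have hcmono : Monotone c := monotone_nat_of_le_succ fun n => (hchain n).1
  have hdanti : Antitone d := antitone_nat_of_succ_le fun n => (hchain n).2.1
  have hcd : ∀ n m, c n ≤ d m := by
    intro n m
    rcases le_total n m with h | h
    · exact le_trans (hcmono h) (hinv m).2.le
    · exact le_trans (hinv n).2.le (hdanti h)
  have hbdd : BddAbove (Set.range c) := ⟨d 0, by rintro _ ⟨n, rfl⟩; exact hcd n 0⟩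
  set x : ℝ := ⨆ n, c n with hxdef
  have hxc : ∀ n, c n ≤ x := fun n => le_ciSup hbdd n
  have hxd : ∀ n, x ≤ d n := fun n => ciSup_le fun m => hcd m n
  have hx0 : 0 < x := lt_of_lt_of_le (hinv 0).1 (hxc 0)
  refine ⟨x, hx0, fun n => (T (n+1)).2.2, ?_, ?_, ?_⟩
  · exact strictMono_nat_of_lt_succ fun n => (hchain (n+1)).2.2.1
  · intro n
    have h0 : (T 0).2.2 = 0 := rfl
    have h1' : (T 0).2.2 < (T 1).2.2 := (hchain 0).2.2.1
    have : (T 1).2.2 ≤ (T (n+1)).2.2 := by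
      have hm : Monotone fun n => (T (n+1)).2.2 :=
        (strictMono_nat_of_lt_succ fun n => (hchain (n+1)).2.2.1).monotone
      exact hm (Nat.zero_le n)
    exact lt_of_lt_of_le (h0 ▸ h1') this
  · have key : ∀ n : ℕ, |f (((T (n+1)).2.2 : ℝ) * x) - s| < 1 / (n + 1) :=
      fun n => (hchain n).2.2.2 x ⟨hxc (n+1), hxd (n+1)⟩
    rw [tendsto_iff_dist_tendsto_zero]
    simp only [Real.dist_eq]
    exact squeeze_zero (fun n => abs_nonneg _) (fun n => (key n).le)
      tendsto_one_div_add_atTop_nhds_zero_nat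
end

section
/- Let X be a metric space and f : (0, ∞) → X continuous such that for every x > 0 the sequence f(n·x) converges in X. Then f(x) converges in X as x → ∞ (no completeness assumed). -/
/-!
For `ε > 0`, the sets of `x > 0` on which `(f (n * x))_{n ≥ N}` is `ε`-Cauchy are closed and cover
`(0, ∞)`, so by Baire one of them has nonempty interior `U`. At rational `x = p / q` the limit is the limit `L`
at `1`, since `f (n * x)` and `f (n * 1)` share the subsequence `f (k * p)`; hence `f (n * x)` is
`ε`-close to `L` for rational `x ∈ U` and `n ≥ N`, and by continuity for every `x ∈ U`. Finally every
large `t` is `k * x` with `x ∈ U` and `k ≥ N`, since the dilates `k * (c, d)` of an interval in `U`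
eventually overlap.
-/

open Set Filter Topology

theorem exists_isOpen_forall_dist_le_of_cauchySeq {Y X : Type*} [TopologicalSpace Y]
    [BaireSpace Y] [Nonempty Y] [PseudoMetricSpace X] {g : ℕ → Y → X} (hg : ∀ n, Continuous (g n))
    (hcauchy : ∀ y, CauchySeq fun n => g n y) {ε : ℝ} (hε : 0 < ε) :
    ∃ U : Set Y, IsOpen U ∧ U.Nonempty ∧
      ∃ N, ∀ y ∈ U, ∀ m ≥ N, ∀ n ≥ N, dist (g m y) (g n y) ≤ ε := by
  set F : ℕ → Set Y := fun N => ⋂ m ≥ N, ⋂ n ≥ N, {y | dist (g m y) (g n y) ≤ ε}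
  have hF_closed : ∀ N, IsClosed (F N) := fun N =>
    isClosed_biInter fun m _ => isClosed_biInter fun n _ =>
      isClosed_le (by fun_prop) continuous_const
  have hF_cover : ⋃ N, F N = univ := by
    refine eq_univ_of_forall fun y => ?_
    obtain ⟨N, hN⟩ := Metric.cauchySeq_iff.1 (hcauchy y) ε hε
    exact mem_iUnion.2 ⟨N, by simpa [F] using fun m hm n hn => (hN m hm n hn).le⟩
  obtain ⟨N, hN⟩ := nonempty_interior_of_iUnion_of_closed hF_closed hF_cover
  refine ⟨interior (F N), isOpen_interior, hN, N, fun y hy m hm n hn => ?_⟩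
  have hy : y ∈ F N := interior_subset hy
  simp only [F, mem_iInter] at hy
  exact hy m hm n hn

section NatMul

variable {X : Type*} [TopologicalSpace X] {f : ℝ → X}

theorem continuous_comp_nat_mul (hf : ContinuousOn f (Ioi 0)) (n : ℕ) :
    Continuous fun y : Ioi (0 : ℝ) => f (n * y) := by
  rcases n.eq_zero_or_pos with rfl | hn
  · simpa using continuous_const
  · exact hf.comp_continuous (by fun_prop) fun y => mem_Ioi.2 (mul_pos (Nat.cast_pos.2 hn) y.2)

theorem tendsto_nat_mul_nat_mul {x : ℝ} {L : X} {k : ℕ} (hk : k ≠ 0)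
    (h : Tendsto (fun n : ℕ => f (n * x)) atTop (𝓝 L)) :
    Tendsto (fun n : ℕ => f (n * (k * x))) atTop (𝓝 L) := by
  have := h.comp (tendsto_id.atTop_mul_const' (Nat.pos_of_ne_zero hk))
  refine this.congr fun n => ?_
  simp [mul_assoc]

theorem tendsto_nat_mul_rat [T2Space X] {L L' : X} {q : ℚ} (hq : 0 < q)
    (h₁ : Tendsto (fun n : ℕ => f n) atTop (𝓝 L))
    (hq' : Tendsto (fun n : ℕ => f (n * q)) atTop (𝓝 L')) :
    Tendsto (fun n : ℕ => f (n * q)) atTop (𝓝 L) := by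
  have hnum : q.num.natAbs ≠ 0 := by simpa using hq.ne'
  have hden : (q.den * (q : ℝ)) = q.num.natAbs * 1 := by
    have h := congrArg ((↑) : ℚ → ℝ) (Rat.den_mul_eq_num q)
    push_cast at h
    rw [h, mul_one, Nat.cast_natAbs, abs_of_pos (Rat.num_pos.2 hq)]
  have e₁ := tendsto_nat_mul_nat_mul q.den_ne_zero hq'
  have e₂ := tendsto_nat_mul_nat_mul (x := 1) hnum (by simpa using h₁)
  rw [hden] at e₁
  rwa [tendsto_nhds_unique e₁ e₂] at hq'

end NatMul

theorem eventually_exists_nat_mul_mem_Ioo {c d : ℝ} (hc : 0 < c) (hcd : c < d) (N : ℕ) :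
    ∀ᶠ t in atTop, ∃ k ≥ N, ∃ x ∈ Ioo c d, t = k * x := by
  obtain ⟨e, hce, hed⟩ := exists_between hcd
  have he0 : 0 < e := hc.trans hce
  filter_upwards [eventually_ge_atTop (N * e), eventually_ge_atTop (c * e / (e - c)),
    eventually_gt_atTop 0] with t htN htc ht0
  set k := ⌈t / e⌉₊
  have hk_ge : t / e ≤ k := Nat.le_ceil _
  have hk_lt : (k : ℝ) < t / e + 1 := Nat.ceil_lt_add_one (by positivity)
  have hk0 : (0 : ℝ) < k := (div_pos ht0 he0).trans_le hk_ge
  refine ⟨k, ?_, t / k, ⟨?_, ?_⟩, (mul_div_cancel₀ _ hk0.ne').symm⟩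
  · exact_mod_cast (le_div_iff₀ he0).2 htN |>.trans hk_ge
  · rw [lt_div_iff₀ hk0]
    rw [div_le_iff₀ (sub_pos.2 hce)] at htc
    have hke : k * e < t + e := by
      calc (k : ℝ) * e < (t / e + 1) * e := by gcongr
        _ = t + e := by field_simp
    nlinarith
  · rw [div_lt_iff₀ hk0]
    rw [div_le_iff₀ he0] at hk_ge
    nlinarith

theorem eventually_dist_le_of_tendsto_nat_mul {X : Type*} [MetricSpace X] {f : ℝ → X}
    (hf : ContinuousOn f (Ioi 0))
    (h : ∀ x > (0 : ℝ), ∃ L, Tendsto (fun n : ℕ => f (n * x)) atTop (𝓝 L))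
    {L : X} (hL : Tendsto (fun n : ℕ => f n) atTop (𝓝 L)) {ε : ℝ} (hε : 0 < ε) :
    ∀ᶠ t in atTop, dist (f t) L ≤ ε := by
  have : BaireSpace (Ioi (0 : ℝ)) := isOpen_Ioi.baireSpace
  have : Nonempty (Ioi (0 : ℝ)) := ⟨⟨1, mem_Ioi.2 one_pos⟩⟩
  obtain ⟨U, hU_open, ⟨y, hy⟩, N, hN⟩ := exists_isOpen_forall_dist_le_of_cauchySeq
    (g := fun n (y : Ioi (0 : ℝ)) => f (n * y)) (continuous_comp_nat_mul hf)
    (fun y => (h y y.2).choose_spec.cauchySeq) hε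
  set S : Set (Ioi (0 : ℝ)) := ⋂ n ≥ N, {y | dist (f (n * y)) L ≤ ε}
  have hS_closed : IsClosed S := isClosed_biInter fun n _ =>
    isClosed_le ((continuous_comp_nat_mul hf n).dist continuous_const) continuous_const
  have hS_rat : U ∩ (Subtype.val ⁻¹' range ((↑) : ℚ → ℝ)) ⊆ S := by
    rintro y ⟨hyU, q, hq⟩
    refine mem_iInter₂.2 fun n hn => ?_
    have hq0 : 0 < q := Rat.cast_pos.1 (mem_Ioi.1 (hq ▸ y.2))
    obtain ⟨L', hL'⟩ := h q (Rat.cast_pos.2 hq0)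
    change dist (f (n * y)) L ≤ ε
    rw [← hq]
    refine le_of_tendsto (tendsto_const_nhds.dist (tendsto_nat_mul_rat hq0 hL hL')) ?_
    filter_upwards [eventually_ge_atTop N] with m hm
    rw [hq]
    exact hN y hyU n hn m hm
  have hU_sub : U ⊆ S :=
    ((Rat.denseRange_cast.preimage isOpen_Ioi.isOpenMap_subtype_val).open_subset_closure_inter
      hU_open).trans (closure_minimal hS_rat hS_closed)
  obtain ⟨l, u, ⟨hl, hu⟩, hlu⟩ := mem_nhds_iff_exists_Ioo_subset.1
    ((isOpen_Ioi.isOpenMap_subtype_val U hU_open).mem_nhds ⟨y, hy, rfl⟩)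
  filter_upwards [eventually_exists_nat_mul_mem_Ioo y.2 hu N]
  rintro _ ⟨k, hk, x, hx, rfl⟩
  obtain ⟨z, hz, rfl⟩ := hlu ⟨hl.trans hx.1, hx.2⟩
  exact mem_iInter₂.1 (hU_sub hz) k hk

theorem croft_metric {X : Type*} [MetricSpace X]
    (f : ℝ → X) (hf : ContinuousOn f (Set.Ioi (0:ℝ)))
    (h : ∀ x > (0:ℝ), ∃ L : X, Filter.Tendsto (fun n : ℕ => f (n * x)) Filter.atTop (nhds L)) :
    ∃ L : X, Filter.Tendsto f Filter.atTop (nhds L) := by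
  obtain ⟨L, hL⟩ := h 1 one_pos
  refine ⟨L, Metric.tendsto_nhds.2 fun ε hε => ?_⟩
  filter_upwards [eventually_dist_le_of_tendsto_nat_mul hf h (by simpa using hL) (half_pos hε)]
    with t ht using ht.trans_lt (half_lt_self hε)
end

section
/- Let X be a regular Hausdorff (T3) topological space and f : (0, ∞) → X continuous such that for every x > 0 the sequence f(n·x) converges in X. Then f(x) converges as x → ∞. -/
open Set Filter Topology

theorem croft_t3 {X : Type*} [TopologicalSpace X] [T3Space X]
    (f : ℝ → X) (hf : ContinuousOn f (Set.Ioi (0:ℝ)))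
    (h : ∀ x > (0:ℝ), ∃ L : X, Filter.Tendsto (fun n : ℕ => f (n * x)) Filter.atTop (nhds L)) :
    ∃ L : X, Filter.Tendsto f Filter.atTop (nhds L) := by
  obtain ⟨L, hL⟩ := h 1 one_pos
  refine ⟨L, ?_⟩
  rw [Filter.tendsto_def]
  intro U hU
  -- choose nested closed neighborhoods C₁ ⊆ interior C₂ ⊆ C₂ ⊆ U of L
  obtain ⟨C₂, hC₂mem, hC₂closed, hC₂U⟩ := exists_mem_nhds_isClosed_subset hU
  have hintC₂ : interior C₂ ∈ 𝓝 L := isOpen_interior.mem_nhds (mem_interior_iff_mem_nhds.2 hC₂mem)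
  obtain ⟨C₁, hC₁mem, hC₁closed, hC₁sub⟩ := exists_mem_nhds_isClosed_subset hintC₂
  set K : Set X := closure (C₁ᶜ) with hKdef
  have hKclosed : IsClosed K := isClosed_closure
  have hLK : L ∉ K := by
    intro hLmem
    have hm : interior C₁ ∈ 𝓝 L := isOpen_interior.mem_nhds (mem_interior_iff_mem_nhds.2 hC₁mem)
    obtain ⟨y, hy1, hy2⟩ := mem_closure_iff_nhds.1 hLmem _ hm
    exact hy2 (interior_subset hy1)
  -- the key fact: for every `c > 0` of the form `k/m` with `k m : ℕ` positive,
  -- the sequence `f (n * c)` tends to `L`.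
  have key : ∀ (k m : ℕ), 0 < k → 0 < m →
      Tendsto (fun n : ℕ => f (n * ((k : ℝ) / m))) atTop (𝓝 L) := by
    intro k m hk hm
    have hc : (0:ℝ) < (k : ℝ) / m := by positivity
    obtain ⟨L', hL'⟩ := h _ hc
    -- subsequence n = j * m of `f (n * (k/m))` is `f (j*k)`, subsequence of `f (n * 1)`
    have h1 : Tendsto (fun j : ℕ => f ((j * k : ℕ) * (1:ℝ))) atTop (𝓝 L) :=
      hL.comp (tendsto_atTop_mono (fun j => Nat.le_mul_of_pos_right j hk) tendsto_id)
    have h2 : Tendsto (fun j : ℕ => f ((j * m : ℕ) * ((k:ℝ) / m))) atTop (𝓝 L') :=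
      hL'.comp (tendsto_atTop_mono (fun j => Nat.le_mul_of_pos_right j hm) tendsto_id)
    have heq : (fun j : ℕ => f ((j * m : ℕ) * ((k:ℝ) / m)))
        = fun j : ℕ => f ((j * k : ℕ) * (1:ℝ)) := by
      funext j
      congr 1
      have hm0 : (m : ℝ) ≠ 0 := by positivity
      push_cast
      field_simp
    rw [heq] at h2
    have : L' = L := tendsto_nhds_unique h2 h1
    rw [this] at hL'
    exact hL'
  -- Baire category on the compact interval [1,2]
  set I : Set ℝ := Set.Icc (1:ℝ) 2 with hIdef
  haveI : CompleteSpace I := isClosed_Icc.completeSpace_coe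
  haveI : Nonempty I := ⟨⟨1, Set.mem_Icc.mpr ⟨le_rfl, one_le_two⟩⟩⟩
  set S : ℕ × Bool → Set I := fun p =>
    {x : I | ∀ n : ℕ, p.1 ≤ n → f (n * (x:ℝ)) ∈ (cond p.2 C₂ K)} with hSdef
  have hcont : ∀ n : ℕ, Continuous fun x : I => f (n * (x:ℝ)) := by
    intro n
    rcases n with _ | m
    · simpa using (continuous_const : Continuous fun _ : I => f 0)
    · refine hf.comp_continuous (by continuity) ?_
      intro x
      have hx1 : (1:ℝ) ≤ (x:ℝ) := x.2.1
      have : (1:ℝ) ≤ ((m+1 : ℕ) : ℝ) := by exact_mod_cast Nat.one_le_iff_ne_zero.2 (Nat.succ_ne_zero m)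
      have : (0:ℝ) < ((m+1 : ℕ) : ℝ) * (x:ℝ) := by nlinarith
      simpa [Set.mem_Ioi] using this
  have hSclosed : ∀ p, IsClosed (S p) := by
    rintro ⟨Np, bp⟩
    have hrw : S (Np, bp) = ⋂ (n : ℕ) (_ : Np ≤ n),
        (fun x : I => f (n * (x:ℝ))) ⁻¹' (cond bp C₂ K) := by
      ext x; simp [hSdef]
    rw [hrw]
    refine isClosed_iInter fun n => isClosed_iInter fun _ => ?_
    refine IsClosed.preimage (hcont n) ?_
    cases bp
    · exact hKclosed
    · exact hC₂closed
  have hScover : (⋃ p, S p) = Set.univ := by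
    rw [Set.eq_univ_iff_forall]
    intro x
    have hx0 : (0:ℝ) < (x:ℝ) := lt_of_lt_of_le one_pos x.2.1
    obtain ⟨Lx, hLx⟩ := h _ hx0
    by_cases hc : Lx ∈ interior C₂
    · have hev : ∀ᶠ n : ℕ in atTop, f (n * (x:ℝ)) ∈ interior C₂ :=
        hLx.eventually (isOpen_interior.eventually_mem hc)
      obtain ⟨N, hN⟩ := eventually_atTop.1 hev
      refine Set.mem_iUnion.2 ⟨(N, true), ?_⟩
      intro n hn
      exact interior_subset (hN n hn)
    · have hLc : Lx ∈ C₁ᶜ := fun hmem => hc (hC₁sub hmem)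
      have hev : ∀ᶠ n : ℕ in atTop, f (n * (x:ℝ)) ∈ C₁ᶜ :=
        hLx.eventually ((hC₁closed.isOpen_compl).eventually_mem hLc)
      obtain ⟨N, hN⟩ := eventually_atTop.1 hev
      refine Set.mem_iUnion.2 ⟨(N, false), ?_⟩
      intro n hn
      exact subset_closure (hN n hn)
  obtain ⟨⟨N, bb⟩, x₀, hx₀⟩ := nonempty_interior_of_iUnion_of_closed hSclosed hScover
  -- extract an honest interval [a,b] ⊆ [1,2] inside the fat closed set
  have hmemnhds : S (N, bb) ∈ 𝓝 x₀ := mem_interior_iff_mem_nhds.1 hx₀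
  rw [nhds_subtype_eq_comap, Filter.mem_comap] at hmemnhds
  obtain ⟨t, ht, hts⟩ := hmemnhds
  obtain ⟨ε, hε, hball⟩ := Metric.mem_nhds_iff.1 ht
  obtain ⟨hx1, hx2⟩ := x₀.2
  set a : ℝ := max 1 ((x₀:ℝ) - ε/2) with hadef
  set b : ℝ := min 2 ((x₀:ℝ) + ε/2) with hbdef
  have hab : a < b :=
    max_lt (lt_min one_lt_two (by linarith)) (lt_min (by linarith) (by linarith))
  have ha1 : (1:ℝ) ≤ a := le_max_left _ _
  have hb2 : b ≤ 2 := min_le_left _ _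
  have ha0 : (0:ℝ) < a := by linarith
  have hb0 : (0:ℝ) < b := by linarith
  have hS' : ∀ y : ℝ, a ≤ y → y ≤ b → ∀ n : ℕ, N ≤ n → f (n * y) ∈ (cond bb C₂ K) := by
    intro y hay hyb n hn
    have hy12 : y ∈ I := ⟨le_trans ha1 hay, le_trans hyb hb2⟩
    have hdist : dist y (x₀:ℝ) < ε := by
      rw [Real.dist_eq, abs_lt]
      have h1 : (x₀:ℝ) - ε/2 ≤ a := le_max_right _ _
      have h2 : b ≤ (x₀:ℝ) + ε/2 := min_le_right _ _
      constructor <;> linarith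
    have : (⟨y, hy12⟩ : I) ∈ S (N, bb) := hts (hball hdist)
    exact this n hn
  cases bb with
  | false =>
    -- impossible: a rational point in [a,b] would force L ∈ K
    exfalso
    obtain ⟨q, hq1, hq2⟩ := exists_rat_btwn hab
    have hq0 : 0 < q := by
      have : (0:ℝ) < (q:ℝ) := lt_of_lt_of_le (lt_of_lt_of_le ha0 hq1.le) le_rfl
      exact_mod_cast this
    have hknum : 0 < q.num := Rat.num_pos.2 hq0
    set k : ℕ := q.num.toNat with hkdef
    set m : ℕ := q.den with hmdef
    have hkz : (k:ℤ) = q.num := Int.toNat_of_nonneg hknum.le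
    have hkpos : 0 < k := by omega
    have hqeq : (q:ℝ) = (k:ℝ) / m := by
      rw [hkdef, hmdef]
      rw [Rat.cast_def]
      congr 1
      exact_mod_cast (Int.toNat_of_nonneg hknum.le).symm
    have htend : Tendsto (fun n : ℕ => f (n * ((k:ℝ)/m))) atTop (𝓝 L) :=
      key k m hkpos q.den_pos
    have hmemK : ∀ᶠ n : ℕ in atTop, f (n * ((k:ℝ)/m)) ∈ K := by
      refine eventually_atTop.2 ⟨N, fun n hn => ?_⟩
      have := hS' (q:ℝ) hq1.le hq2.le n hn
      simpa [hqeq] using this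
    exact hLK (hKclosed.mem_of_tendsto htend hmemK)
  | true =>
    -- the sets f([n a, n b]) ⊆ C₂ for n ≥ N, and the intervals eventually cover a ray
    rw [Filter.mem_atTop_sets]
    refine ⟨max (a*b/(b-a)) ((N+1)*b), fun z hz => ?_⟩
    have hz1 : a*b/(b-a) ≤ z := le_trans (le_max_left _ _) hz
    have hz2 : ((N:ℝ)+1)*b ≤ z := le_trans (le_max_right _ _) hz
    have hzpos : 0 < z := lt_of_lt_of_le (by positivity) hz2
    set n : ℕ := ⌈z/b⌉₊ with hndef
    have h1 : z/b ≤ (n:ℝ) := Nat.le_ceil _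
    have h2 : (n:ℝ) < z/b + 1 := Nat.ceil_lt_add_one (by positivity)
    have hzab : a*b ≤ z*(b-a) := by
      rw [div_le_iff₀ (by linarith)] at hz1
      linarith
    have h3 : z/b + 1 ≤ z/a := by
      rw [div_add' _ _ _ (ne_of_gt hb0), div_le_div_iff₀ hb0 ha0]
      nlinarith
    have hNn : N + 1 ≤ n := by
      have : (N:ℝ) + 1 ≤ z/b := by
        rw [le_div_iff₀ hb0]; linarith
      have h' : ((N+1 : ℕ) : ℝ) ≤ (n:ℝ) := by push_cast; linarith
      exact_mod_cast h'
    have hnpos : 0 < n := lt_of_lt_of_le (Nat.succ_pos N) hNn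
    have hn0 : ((n:ℝ)) ≠ 0 := by positivity
    have hya : a ≤ z / n := by
      rw [le_div_iff₀ (by positivity)]
      have : (n:ℝ) ≤ z/a := h2.le.trans h3
      rw [le_div_iff₀ ha0] at this
      linarith
    have hyb : z / n ≤ b := by
      rw [div_le_iff₀ (by positivity)]
      rw [div_le_iff₀ hb0] at h1
      linarith
    have := hS' (z/n) hya hyb n (le_trans (Nat.le_succ N) hNn)
    have hzz : (n:ℝ) * (z / n) = z := by field_simp
    rw [hzz] at this
    exact hC₂U this
end

section
/- If f : (1, ∞) → ℝ is continuous and for every x > 1 the sequence f(x^n) tends to 0 as n → ∞, then f(x) → 0 as x → ∞. -/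
/-!
By the Baire category theorem applied to the closed sets `{x > 1 | ∀ n ≥ N, |f (x ^ n)| ≤ ε}`,
one of them contains an interval `[u, v]` with `1 < u < v`. The intervals `[u ^ n, v ^ n]` grow
and eventually overlap, since `(v / u) ^ n → ∞`, so every large `x` is some `y ^ n` with
`y ∈ [u, v]` and `n ≥ N`, whence `|f x| ≤ ε`.
-/

open Filter Set Topology

theorem BaireSpace.exists_isOpen_forall_ge_mem_of_tendsto {X Y : Type*} [TopologicalSpace X]
    [BaireSpace X] [Nonempty X] [TopologicalSpace Y] {g : ℕ → X → Y} (hg : ∀ n, Continuous (g n))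
    {a : Y} (hlim : ∀ x, Tendsto (fun n => g n x) atTop (𝓝 a)) {s : Set Y} (hs : IsClosed s)
    (hsa : s ∈ 𝓝 a) : ∃ U : Set X, IsOpen U ∧ U.Nonempty ∧ ∃ N, ∀ n ≥ N, ∀ x ∈ U, g n x ∈ s := by
  set K : ℕ → Set X := fun N => ⋂ n ≥ N, g n ⁻¹' s
  have hK : ∀ N, IsClosed (K N) := fun N =>
    isClosed_biInter fun n _ => hs.preimage (hg n)
  have hcover : ⋃ N, K N = univ := by
    refine eq_univ_of_forall fun x => ?_
    obtain ⟨N, hN⟩ := eventually_atTop.1 (hlim x hsa)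
    exact mem_iUnion.2 ⟨N, mem_iInter₂.2 hN⟩
  obtain ⟨N, hN⟩ := nonempty_interior_of_iUnion_of_closed hK hcover
  exact ⟨_, isOpen_interior, hN, N, fun n hn x hx => mem_iInter₂.1 (interior_subset hx) n hn⟩

theorem eventually_pow_succ_le_pow {u v : ℝ} (hu : 0 < u) (huv : u < v) :
    ∀ᶠ n : ℕ in atTop, u ^ (n + 1) ≤ v ^ n := by
  filter_upwards [(tendsto_pow_atTop_atTop_of_one_lt ((one_lt_div hu).2 huv)).eventually_ge_atTop u]
    with n hn
  calc u ^ (n + 1) = u * u ^ n := pow_succ' u n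
    _ ≤ (v / u) ^ n * u ^ n := by gcongr
    _ = v ^ n := by rw [div_pow, div_mul_cancel₀ _ (pow_ne_zero n hu.ne')]

theorem eventually_exists_mem_Icc_pow_eq {u v : ℝ} (hu : 1 < u) (huv : u < v) (N : ℕ) :
    ∀ᶠ x in atTop, ∃ n ≥ N, ∃ y ∈ Icc u v, y ^ n = x := by
  obtain ⟨M, hM⟩ := eventually_atTop.1
    ((eventually_pow_succ_le_pow (zero_lt_one.trans hu) huv).and (eventually_ge_atTop N))
  filter_upwards [eventually_ge_atTop (u ^ M)] with x hx
  obtain ⟨n, hnx, hxn⟩ := exists_nat_pow_near ((one_le_pow₀ hu.le).trans hx) hu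
  have hMn : M ≤ n := Nat.lt_succ_iff.1 ((pow_lt_pow_iff_right₀ hu).1 (hx.trans_lt hxn))
  obtain ⟨hgap, hNn⟩ := hM n hMn
  obtain ⟨y, hy, hyx⟩ := intermediate_value_Icc huv.le (continuous_pow n).continuousOn
    ⟨hnx, hxn.le.trans hgap⟩
  exact ⟨n, hNn, y, hy, hyx⟩

theorem exists_Icc_forall_ge_pow_mem {Y : Type*} [TopologicalSpace Y] {f : ℝ → Y}
    (hf : ContinuousOn f (Ioi 1)) {a : Y}
    (h : ∀ x > (1 : ℝ), Tendsto (fun n : ℕ => f (x ^ n)) atTop (𝓝 a)) {s : Set Y}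
    (hs : IsClosed s) (hsa : s ∈ 𝓝 a) :
    ∃ u v, 1 < u ∧ u < v ∧ ∃ N, ∀ n ≥ N, ∀ y ∈ Icc u v, f (y ^ n) ∈ s := by
  have : BaireSpace (Ioi (1 : ℝ)) := isOpen_Ioi.baireSpace
  have : Nonempty (Ioi (1 : ℝ)) := ⟨⟨2, mem_Ioi.2 one_lt_two⟩⟩
  -- Shifted to `n + 1` because `x ^ 0 = 1` leaves `Ioi 1`.
  have hpow : ∀ n, MapsTo (fun x : ℝ => x ^ (n + 1)) (Ioi 1) (Ioi 1) := fun n x hx =>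
    one_lt_pow₀ (mem_Ioi.1 hx) n.succ_ne_zero
  obtain ⟨U, hU, ⟨x₀, hx₀⟩, N, hN⟩ := BaireSpace.exists_isOpen_forall_ge_mem_of_tendsto
    (g := fun n (x : Ioi (1 : ℝ)) => f ((x : ℝ) ^ (n + 1)))
    (fun n => (hf.comp_continuous (continuous_subtype_val.pow _) fun x => hpow n x.2))
    (fun x => (h x x.2).comp (tendsto_add_atTop_nat 1)) hs hsa
  obtain ⟨c, d, hcd, hsub⟩ := (isOpen_Ioi.isOpenMap_subtype_val U hU).exists_Ioo_subset
    ⟨x₀, mem_image_of_mem _ hx₀⟩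
  obtain ⟨u, hcu, hud⟩ := exists_between hcd
  obtain ⟨v, huv, hvd⟩ := exists_between hud
  have hIcc : Icc u v ⊆ Subtype.val '' U := (Icc_subset_Ioo hcu hvd).trans hsub
  obtain ⟨z, -, hz⟩ := hIcc (left_mem_Icc.2 huv.le)
  refine ⟨u, v, hz ▸ z.2, huv, N + 1, fun n hn y hy => ?_⟩
  obtain ⟨m, rfl⟩ := Nat.exists_eq_add_of_le' hn
  obtain ⟨w, hw, rfl⟩ := hIcc hy
  exact hN (m + N) le_add_self w hw

theorem tendsto_atTop_of_tendsto_pow {Y : Type*} [TopologicalSpace Y] [RegularSpace Y] {f : ℝ → Y}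
    (hf : ContinuousOn f (Ioi 1)) {a : Y}
    (h : ∀ x > (1 : ℝ), Tendsto (fun n : ℕ => f (x ^ n)) atTop (𝓝 a)) :
    Tendsto f atTop (𝓝 a) := by
  refine (closed_nhds_basis a).tendsto_right_iff.2 fun s ⟨hsa, hs⟩ => ?_
  obtain ⟨u, v, hu, huv, N, hN⟩ := exists_Icc_forall_ge_pow_mem hf h hs hsa
  filter_upwards [eventually_exists_mem_Icc_pow_eq hu huv N]
  rintro _ ⟨n, hn, y, hy, rfl⟩
  exact hN n hn y hy

theorem croft_powers (f : ℝ → ℝ) (hf : ContinuousOn f (Set.Ioi (1:ℝ)))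
    (h : ∀ x > (1:ℝ), Filter.Tendsto (fun n : ℕ => f (x ^ n)) Filter.atTop (nhds 0)) :
    Filter.Tendsto f Filter.atTop (nhds 0) :=
  tendsto_atTop_of_tendsto_pow hf h
end

section
/- If f : ℝ → ℝ is continuous and for every x ∈ ℝ the sequence f(x + log n) tends to 0 as n → ∞, then f(x) → 0 as x → ∞. -/
open Filter Topology Set

/-!
Baire category: the closed sets `{x | |f (x + log n)| ≤ ε for all n ≥ N}` cover `ℝ`, so one of
them contains an interval `(a, b)`. Since `log n → ∞` with gaps `log (n + 1) - log n → 0`, every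
large `y` is of the form `x + log n` with `x ∈ (a, b)` and `n ≥ N`, hence `|f y| ≤ ε`.
-/

theorem exists_isOpen_nonempty_eventually_subset {X : Type*} [TopologicalSpace X] [BaireSpace X]
    [Nonempty X] {s : ℕ → Set X} (hs : ∀ n, IsClosed (s n)) (h : ∀ x, ∀ᶠ n in atTop, x ∈ s n) :
    ∃ U, IsOpen U ∧ U.Nonempty ∧ ∀ᶠ n in atTop, U ⊆ s n := by
  have hclosed : ∀ N, IsClosed (⋂ n ≥ N, s n) := fun N =>
    isClosed_biInter fun n _ => hs n
  have hcover : ⋃ N, ⋂ n ≥ N, s n = univ :=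
    eq_univ_of_forall fun x => by simpa using eventually_atTop.mp (h x)
  obtain ⟨N, hN⟩ := nonempty_interior_of_iUnion_of_closed hclosed hcover
  refine ⟨_, isOpen_interior, hN, eventually_atTop.mpr ⟨N, fun n hn => ?_⟩⟩
  exact interior_subset.trans (biInter_subset_of_mem hn)

theorem eventually_exists_ge_sub_mem_Ioo {s : ℕ → ℝ} (hs : Tendsto s atTop atTop)
    (hgap : Tendsto (fun n => s (n + 1) - s n) atTop (𝓝 0)) {a b : ℝ} (hab : a < b) (N : ℕ) :
    ∀ᶠ y in atTop, ∃ n ≥ N, y - s n ∈ Ioo a b := by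
  obtain ⟨M, hM⟩ := eventually_atTop.mp
    ((hgap.eventually (gt_mem_nhds (sub_pos.mpr hab))).and (eventually_ge_atTop N))
  filter_upwards [eventually_ge_atTop (s M + b)] with y hy
  have hex : ∃ k, y - b < s (M + k) := by
    obtain ⟨k, hk⟩ := (hs.eventually_gt_atTop (y - b)).exists_forall_of_atTop
    exact ⟨k, hk (M + k) (Nat.le_add_left k M)⟩
  classical
  -- `M + k` is the first index from `M` on at which `s` exceeds `y - b`; it is not `M` itself.
  set k := Nat.find hex
  have hk : y - b < s (M + k) := Nat.find_spec hex
  have hk0 : k ≠ 0 := by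
    intro hk0
    rw [hk0, add_zero] at hk
    linarith
  have hprev : s (M + (k - 1)) ≤ y - b :=
    not_lt.mp (Nat.find_min hex (Nat.sub_lt (Nat.pos_of_ne_zero hk0) one_pos))
  have hstep := (hM (M + (k - 1)) (Nat.le_add_right M _)).1
  rw [show M + (k - 1) + 1 = M + k by omega] at hstep
  refine ⟨M + k, (hM M le_rfl).2.trans (Nat.le_add_right M k), ?_, ?_⟩ <;> linarith

theorem croft_log (f : ℝ → ℝ) (hf : Continuous f)
    (h : ∀ x : ℝ, Filter.Tendsto (fun n : ℕ => f (x + Real.log n)) Filter.atTop (nhds 0)) :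
    Filter.Tendsto f Filter.atTop (nhds 0) := by
  refine Metric.nhds_basis_closedBall.tendsto_right_iff.mpr fun ε hε => ?_
  have hclosed : ∀ n : ℕ, IsClosed {x | f (x + Real.log n) ∈ Metric.closedBall 0 ε} := fun n =>
    Metric.isClosed_closedBall.preimage (by fun_prop)
  obtain ⟨U, hU, ⟨x₀, hx₀⟩, hUs⟩ := exists_isOpen_nonempty_eventually_subset hclosed
    fun x => (h x).eventually (Metric.closedBall_mem_nhds 0 hε)
  obtain ⟨N, hN⟩ := eventually_atTop.mp hUs
  obtain ⟨r, hr, hball⟩ := Metric.isOpen_iff.mp hU x₀ hx₀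
  have hlog : Tendsto (fun n : ℕ => Real.log n) atTop atTop :=
    Real.tendsto_log_atTop.comp tendsto_natCast_atTop_atTop
  have hgap : Tendsto (fun n : ℕ => Real.log ↑(n + 1) - Real.log n) atTop (𝓝 0) := by
    simpa only [Nat.cast_add_one] using Real.tendsto_log_nat_add_one_sub_log
  filter_upwards [eventually_exists_ge_sub_mem_Ioo hlog hgap (by linarith : x₀ - r < x₀ + r) N]
    with y ⟨n, hn, hy⟩
  have hx := hN n hn (hball (by rwa [← Real.ball_eq_Ioo] at hy))
  simpa only [mem_ofPred_eq, sub_add_cancel] using hx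
end

section
/- Let (ℓ_n) be a strictly increasing sequence of positive reals with ℓ_n → ∞ and ℓ_{n+1}/ℓ_n → 1. If f : (0, ∞) → ℝ is continuous and for every x > 0 the limit lim_{n→∞} f(ℓ_n x) exists, then lim_{x→∞} f(x) exists. -/
open Filter Set


lemma croft_baire (δ : ℝ) (hδ : 0 < δ) (g : ℕ → ℝ → ℝ)
    (hg : ∀ n, ContinuousOn (g n) (Set.Icc (2:ℝ) 3))
    (hconv : ∀ x ∈ Set.Icc (2:ℝ) 3, ∃ N : ℕ, ∀ m ≥ N, ∀ n ≥ N, |g m x - g n x| ≤ δ) :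
    ∃ N : ℕ, ∃ a b : ℝ, 2 ≤ a ∧ a < b ∧ b ≤ 3 ∧
      ∀ t ∈ Set.Icc a b, ∀ m ≥ N, ∀ n ≥ N, |g m t - g n t| ≤ δ := by
  set E : ℕ → Set ℝ := fun N => {x ∈ Set.Icc (2:ℝ) 3 | ∀ m ≥ N, ∀ n ≥ N, |g m x - g n x| ≤ δ}
    with hE
  have hEclosed : ∀ N, IsClosed (E N) := by
    intro N
    have heq : E N = ⋂ (m : ℕ) (n : ℕ),
        {x ∈ Set.Icc (2:ℝ) 3 | N ≤ m → N ≤ n → |g m x - g n x| ≤ δ} := by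
      ext x
      simp only [hE, mem_setOf_eq, mem_sep_iff, mem_iInter]
      constructor
      · rintro ⟨h1, h2⟩ m n; exact ⟨h1, fun hm hn => h2 m hm n hn⟩
      · intro hh; exact ⟨(hh 0 0).1, fun m hm n hn => (hh m n).2 hm hn⟩
    rw [heq]
    refine isClosed_iInter fun m => isClosed_iInter fun n => ?_
    by_cases hm : N ≤ m ∧ N ≤ n
    · have : {x ∈ Set.Icc (2:ℝ) 3 | N ≤ m → N ≤ n → |g m x - g n x| ≤ δ}
          = Set.Icc (2:ℝ) 3 ∩ (fun x => |g m x - g n x|) ⁻¹' Set.Iic δ := by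
        ext x; simp [hm.1, hm.2]
      rw [this]
      exact (((hg m).sub (hg n)).abs).preimage_isClosed_of_isClosed isClosed_Icc isClosed_Iic
    · have : {x ∈ Set.Icc (2:ℝ) 3 | N ≤ m → N ≤ n → |g m x - g n x| ≤ δ}
          = Set.Icc (2:ℝ) 3 := by
        ext x; simp only [mem_sep_iff, and_iff_left_iff_imp]
        intro _ h1 h2; exact absurd ⟨h1, h2⟩ hm
      rw [this]; exact isClosed_Icc
  haveI : CompleteSpace (Set.Icc (2:ℝ) 3) := isClosed_Icc.completeSpace_coe
  haveI : Nonempty (Set.Icc (2:ℝ) 3) := ⟨⟨2, by norm_num⟩⟩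
  have hcover : (⋃ N, ((↑·) ⁻¹' E N : Set (Set.Icc (2:ℝ) 3))) = Set.univ := by
    ext x
    simp only [mem_iUnion, mem_univ, iff_true, mem_preimage]
    obtain ⟨N, hN⟩ := hconv x x.2
    exact ⟨N, x.2, hN⟩
  obtain ⟨N, x₀, hx₀⟩ := nonempty_interior_of_iUnion_of_closed
    (fun N => (hEclosed N).preimage continuous_subtype_val) hcover
  have hmem : ((↑·) ⁻¹' E N : Set (Set.Icc (2:ℝ) 3)) ∈ nhds x₀ :=
    mem_interior_iff_mem_nhds.mp hx₀
  rw [nhds_subtype, Filter.mem_comap] at hmem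
  obtain ⟨V, hV, hVsub⟩ := hmem
  obtain ⟨r, hr, hball⟩ := Metric.mem_nhds_iff.mp hV
  obtain ⟨hx2, hx3⟩ := x₀.2
  refine ⟨N, max ((x₀:ℝ) - r/2) 2, min ((x₀:ℝ) + r/2) 3, le_max_right _ _,
    max_lt (lt_min (by linarith) (by linarith)) (lt_min (by linarith) (by norm_num)),
    min_le_right _ _, ?_⟩
  intro t ht m hm n hn
  have ht23 : t ∈ Set.Icc (2:ℝ) 3 :=
    ⟨le_trans (le_max_right _ _) ht.1, le_trans ht.2 (min_le_right _ _)⟩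
  have htV : t ∈ V := by
    apply hball
    rw [Metric.mem_ball, Real.dist_eq, abs_sub_lt_iff]
    constructor
    · have := le_trans ht.2 (min_le_left _ _); linarith
    · have := le_trans (le_max_left _ _) ht.1; linarith
  have : (⟨t, ht23⟩ : Set.Icc (2:ℝ) 3) ∈ ((↑·) ⁻¹' E N : Set (Set.Icc (2:ℝ) 3)) :=
    hVsub htV
  exact this.2 m hm n hn


theorem croft_subexponential (ℓ : ℕ → ℝ) (hpos : ∀ n, 0 < ℓ n) (hmono : StrictMono ℓ)
    (htop : Filter.Tendsto ℓ Filter.atTop Filter.atTop)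
    (hratio : Filter.Tendsto (fun n => ℓ (n + 1) / ℓ n) Filter.atTop (nhds 1))
    (f : ℝ → ℝ) (hf : ContinuousOn f (Set.Ioi (0:ℝ)))
    (h : ∀ x > (0:ℝ), ∃ L : ℝ, Filter.Tendsto (fun n => f (ℓ n * x)) Filter.atTop (nhds L)) :
    ∃ L : ℝ, Filter.Tendsto f Filter.atTop (nhds L) := by
  obtain ⟨L₀, hL₀⟩ := h 1 one_pos
  refine ⟨L₀, Metric.tendsto_atTop.mpr fun ε hε => ?_⟩
  set δ := ε / 5 with hδdef
  have hδ : 0 < δ := by positivity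
  set g : ℕ → ℝ → ℝ := fun n t => f (ℓ n * t) with hgdef
  have hgc : ∀ n, ContinuousOn (g n) (Set.Icc (2:ℝ) 3) := by
    intro n
    refine hf.comp ((continuous_mul_left (ℓ n)).continuousOn) fun t ht => ?_
    have := hpos n
    exact mem_Ioi.mpr (by nlinarith [ht.1])
  have hconv : ∀ x ∈ Set.Icc (2:ℝ) 3, ∃ N : ℕ, ∀ m ≥ N, ∀ n ≥ N, |g m x - g n x| ≤ δ := by
    intro x hx
    obtain ⟨L, hL⟩ := h x (by linarith [hx.1])
    obtain ⟨N, hN⟩ := (Metric.tendsto_atTop.mp hL (δ/2) (by positivity))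
    refine ⟨N, fun m hm n hn => ?_⟩
    have h1 := hN m hm; have h2 := hN n hn
    rw [Real.dist_eq] at h1 h2
    have := abs_sub_le (g m x) L (g n x)
    rw [abs_sub_comm L (g n x)] at this
    simp only [hgdef] at *
    linarith
  obtain ⟨N, a, b, ha2, hab, hb3, hE⟩ := croft_baire δ hδ g hgc hconv
  have ha0 : (0:ℝ) < a := by linarith
  set t₀ := (a + b) / 2 with ht₀def
  have ht₀ : t₀ ∈ Set.Icc a b := ⟨by linarith, by linarith⟩
  have ht₀0 : 0 < t₀ := by linarith
  have hcontAt : ContinuousAt (g N) t₀ := by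
    have h1 : ContinuousAt f (ℓ N * t₀) :=
      hf.continuousAt (Ioi_mem_nhds (mul_pos (hpos N) ht₀0))
    exact h1.comp (continuous_mul_left (ℓ N)).continuousAt
  obtain ⟨r, hr, hball⟩ := Metric.continuousAt_iff.mp hcontAt δ hδ
  set a' := t₀ with ha'def
  set b' := min (t₀ + r/2) b with hb'def
  have ha'0 : 0 < a' := ht₀0
  have ha'b' : a' < b' := lt_min (by linarith) (by linarith)
  have hsub : Set.Icc a' b' ⊆ Set.Icc a b :=
    Set.Icc_subset_Icc ht₀.1 (min_le_right _ _)
  have hnear : ∀ t ∈ Set.Icc a' b', |g N t - g N t₀| < δ := by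
    intro t ht
    have h1 : dist t t₀ < r := by
      rw [Real.dist_eq, abs_sub_lt_iff]
      have := le_trans ht.2 (min_le_left _ _)
      constructor <;> [linarith; linarith [ht.1]]
    have := hball h1
    rwa [Real.dist_eq] at this
  -- overlap of consecutive intervals
  have hratio' : ∀ᶠ n in atTop, ℓ (n + 1) * a' < ℓ n * b' := by
    have hlt : (1:ℝ) < b' / a' := (one_lt_div ha'0).mpr ha'b'
    filter_upwards [hratio.eventually (eventually_lt_nhds hlt)] with n hn
    rw [div_lt_div_iff₀ (hpos n) ha'0] at hn
    linarith
  obtain ⟨N₁, hN₁⟩ := eventually_atTop.mp hratio'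
  set N₂ := max N N₁ with hN₂def
  set X := ℓ N₂ * a' with hXdef
  have key : ∀ x ≥ X, |f x - g N t₀| < 2 * δ := by
    intro x hx
    have hex : ∃ n, x < ℓ n * a' := by
      obtain ⟨n, hn⟩ := (htop.eventually_gt_atTop (x / a')).exists
      exact ⟨n, by rw [div_lt_iff₀ ha'0] at hn; linarith⟩
    have hm_spec : x < ℓ (Nat.find hex) * a' := Nat.find_spec hex
    have hmN : N₂ < Nat.find hex := by
      by_contra hle
      push_neg at hle
      have h1 : ℓ (Nat.find hex) ≤ ℓ N₂ := hmono.monotone hle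
      nlinarith
    set n := Nat.find hex - 1 with hndef
    have hn1 : n + 1 = Nat.find hex := by omega
    have hnN₂ : N₂ ≤ n := by omega
    have hlow : ℓ n * a' ≤ x := by
      have := Nat.find_min hex (show n < Nat.find hex by omega)
      linarith [not_lt.mp this]
    have hup : x ≤ ℓ n * b' := by
      have h1 := hN₁ n (le_trans (le_max_right _ _) hnN₂)
      rw [hn1] at h1
      linarith
    have hℓn : 0 < ℓ n := hpos n
    set t := x / ℓ n with htdef
    have htmem : t ∈ Set.Icc a' b' :=
      ⟨(le_div_iff₀ hℓn).mpr (by linarith), (div_le_iff₀ hℓn).mpr (by linarith)⟩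
    have hx_eq : ℓ n * t = x := by rw [htdef]; field_simp
    have h1 : |g n t - g N t| ≤ δ :=
      hE t (hsub htmem) n (le_trans (le_max_left N N₁) hnN₂) N le_rfl
    have h2 : |g N t - g N t₀| < δ := hnear t htmem
    have h3 : g n t = f x := by rw [hgdef]; simp only; rw [hx_eq]
    rw [h3] at h1
    have := abs_sub_le (f x) (g N t) (g N t₀)
    linarith
  have hX0 : 0 < X := mul_pos (hpos N₂) ha'0
  have hLc : |L₀ - g N t₀| ≤ 2 * δ := by
    have hev : ∀ᶠ n in atTop, |f (ℓ n * 1) - g N t₀| ≤ 2 * δ := by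
      filter_upwards [htop.eventually_ge_atTop X] with n hn
      have := key (ℓ n * 1) (by rw [mul_one]; exact hn)
      linarith
    have htend : Tendsto (fun n => |f (ℓ n * 1) - g N t₀|) atTop (nhds |L₀ - g N t₀|) :=
      ((hL₀.sub_const _).abs)
    exact le_of_tendsto htend hev
  refine ⟨X, fun x hx => ?_⟩
  have h1 := key x hx
  rw [Real.dist_eq]
  have h2 := abs_sub_le (f x) (g N t₀) L₀
  rw [abs_sub_comm (g N t₀) L₀] at h2
  have : |f x - L₀| ≤ 4 * δ := by linarith
  linarith [hδdef ▸ this]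
end

section
/- Let (ℓ_n) be a strictly increasing sequence of positive reals with ℓ_n → ∞ and ℓ_{n+1}/ℓ_n → 1. Let U ⊆ (0, ∞) be open and unbounded, and let 0 < a < b. Then for every n there exist n' ≥ n and a', b' with a < a' < b' < b such that ℓ_{n'}·[a', b'] ⊆ U. -/
theorem croft_lemma_subexponential (ℓ : ℕ → ℝ) (hpos : ∀ n, 0 < ℓ n) (hmono : StrictMono ℓ)
    (htop : Filter.Tendsto ℓ Filter.atTop Filter.atTop)
    (hratio : Filter.Tendsto (fun n => ℓ (n + 1) / ℓ n) Filter.atTop (nhds 1))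
    (U : Set ℝ) (hU : IsOpen U) (hsub : U ⊆ Set.Ioi (0:ℝ))
    (hunb : ∀ M : ℝ, ∃ u ∈ U, u > M)
    (a b : ℝ) (ha : 0 < a) (hab : a < b) (n : ℕ) :
    ∃ n' ≥ n, ∃ a' b' : ℝ, a < a' ∧ a' < b' ∧ b' < b ∧
      ∀ t ∈ Set.Icc a' b', ℓ n' * t ∈ U := by
  set c : ℝ := (2*a + b)/3 with hc
  set d : ℝ := (a + 2*b)/3 with hd
  have hac : a < c := by rw [hc]; linarith
  have hcd : c < d := by rw [hc, hd]; linarith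
  have hdb : d < b := by rw [hd]; linarith
  have hc0 : 0 < c := lt_trans ha hac
  have hd0 : 0 < d := lt_trans hc0 hcd
  have hdc : 1 < d / c := (one_lt_div hc0).2 hcd
  have h1 : ∀ᶠ m in Filter.atTop, ℓ (m+1) / ℓ m < d / c :=
    hratio.eventually_lt_const hdc
  obtain ⟨N₀, hN₀⟩ := Filter.eventually_atTop.1 h1
  have key : ∀ m ≥ N₀, ℓ (m+1) * c < ℓ m * d := by
    intro m hm
    have h := hN₀ m hm
    rw [div_lt_div_iff₀ (hpos m) hc0] at h
    linarith
  set N := max N₀ n with hN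
  obtain ⟨u, huU, huN⟩ := hunb (ℓ N * c)
  -- eventually u ≤ ℓ m * c
  have hev : ∃ k, u ≤ ℓ (N + k) * c := by
    obtain ⟨M, hM⟩ := Filter.eventually_atTop.1 (htop.eventually_ge_atTop (u / c))
    refine ⟨M, ?_⟩
    have : u / c ≤ ℓ (N + M) := hM _ (Nat.le_add_left M N)
    exact (div_le_iff₀ hc0).1 this
  set k := Nat.find hev with hk
  have hk0 : k ≠ 0 := by
    intro h0
    have := Nat.find_spec hev
    rw [← hk, h0] at this
    simp at this
    linarith
  set m := N + (k - 1) with hm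
  have hmN : N ≤ m := Nat.le_add_right _ _
  have hm1 : ℓ m * c < u := by
    have := Nat.find_min hev (m := k - 1) (by omega)
    push_neg at this
    exact this
  have hm2 : u ≤ ℓ (m + 1) * c := by
    have hs := Nat.find_spec hev
    rw [← hk] at hs
    have : m + 1 = N + k := by omega
    rw [this]; exact hs
  have humd : u < ℓ m * d :=
    lt_of_le_of_lt hm2 (key m (le_trans (le_max_left _ _) hmN))
  -- open neighborhood
  have huV : u ∈ U ∩ Set.Ioo (ℓ m * c) (ℓ m * d) := ⟨huU, hm1, humd⟩
  have hVopen : IsOpen (U ∩ Set.Ioo (ℓ m * c) (ℓ m * d)) := hU.inter isOpen_Ioo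
  obtain ⟨δ, hδ0, hball⟩ := Metric.isOpen_iff.1 hVopen u huV
  set ε := δ / 2 with hε
  have hε0 : 0 < ε := by positivity
  have hmem : ∀ x : ℝ, u - ε ≤ x → x ≤ u + ε → x ∈ U ∩ Set.Ioo (ℓ m * c) (ℓ m * d) := by
    intro x h1 h2
    apply hball
    rw [Metric.mem_ball, Real.dist_eq, abs_lt]
    constructor <;> [linarith [hε0]; linarith [hε0]]
  have hlm : 0 < ℓ m := hpos m
  have he1 : ℓ m * c < u - ε := (hmem (u - ε) le_rfl (by linarith)).2.1
  have he2 : u + ε < ℓ m * d := (hmem (u + ε) (by linarith) le_rfl).2.2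
  refine ⟨m, le_trans (le_max_right _ _) hmN, (u - ε) / ℓ m, (u + ε) / ℓ m, ?_, ?_, ?_, ?_⟩
  · have : a < c := hac
    calc a < c := hac
    _ < (u - ε) / ℓ m := by rwa [lt_div_iff₀ hlm, mul_comm]
  · exact div_lt_div_of_pos_right (by linarith) hlm
  · calc (u + ε) / ℓ m < d := by rwa [div_lt_iff₀ hlm, mul_comm]
    _ < b := hdb
  · intro t ht
    have h1 : u - ε ≤ ℓ m * t := by
      have := ht.1
      rw [div_le_iff₀ hlm] at this
      linarith [this]
    have h2 : ℓ m * t ≤ u + ε := by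
      have := ht.2
      rw [le_div_iff₀ hlm] at this
      linarith [this]
    exact (hmem _ h1 h2).1
end

section
/- Let U be an open unbounded subset of (0, ∞) and 0 < a < b. Then for every n ∈ ℕ there exist an integer n' ≥ n and reals a' < b' with [a', b'] ⊆ (a, b) such that n'·[a', b'] ⊆ U. -/
/-!
Pick `u ∈ U` so large that `u > n b` and the interval `(u / b, u / a)`, of length
`u (b - a) / (a b)`, is longer than `1`. It then contains an integer `n' > n`, so `u / n' ∈ (a, b)`
and `n' · (u / n') = u ∈ U`. Since `U` is open, a small closed interval around `u / n'` still lies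
in `(a, b)` and is mapped into `U` by `t ↦ n' t`.
-/

open Set

theorem exists_nat_btwn_of_add_one_lt {R : Type*} [Semiring R] [LinearOrder R]
    [IsStrictOrderedRing R] [FloorSemiring R] {x y : R} (hx : 0 ≤ x) (h : x + 1 < y) :
    ∃ k : ℕ, x < k ∧ (k : R) < y :=
  ⟨⌊x⌋₊ + 1, by exact_mod_cast Nat.lt_floor_add_one x, by
    push_cast
    exact (add_le_add_left (Nat.floor_le hx) 1).trans_lt h⟩

theorem IsOpen.exists_Icc_subset {α : Type*} [LinearOrder α] [TopologicalSpace α]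
    [OrderTopology α] [DenselyOrdered α] [Nontrivial α] {s : Set α} (hs : IsOpen s)
    (h : s.Nonempty) : ∃ a b, a < b ∧ Icc a b ⊆ s := by
  obtain ⟨a, b, hab, hsub⟩ := hs.exists_Ioo_subset h
  obtain ⟨c, hac, hcb⟩ := exists_between hab
  obtain ⟨d, hcd, hdb⟩ := exists_between hcb
  exact ⟨c, d, hcd, (Icc_subset_Ioo hac hdb).trans hsub⟩

theorem div_add_one_lt_div_of_mul_div_sub_lt {a b u : ℝ} (ha : 0 < a) (hab : a < b)
    (hu : a * b / (b - a) < u) : u / b + 1 < u / a := by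
  have hb : 0 < b := ha.trans hab
  rw [div_lt_iff₀ (sub_pos.mpr hab)] at hu
  rw [div_add_one hb.ne', div_lt_div_iff₀ hb ha]
  nlinarith

theorem croft_lemma_intervals_general (U : Set ℝ) (hU : IsOpen U)
    (hunb : ∀ M : ℝ, ∃ u ∈ U, u > M)
    (a b : ℝ) (ha : 0 < a) (hab : a < b) (n : ℕ) :
    ∃ n' : ℕ, n' ≥ n ∧ ∃ a' b' : ℝ, a' < b' ∧ Set.Icc a' b' ⊆ Set.Ioo a b ∧
      ∀ t ∈ Set.Icc a' b', (n' : ℝ) * t ∈ U := by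
  have hb : 0 < b := ha.trans hab
  obtain ⟨u, huU, hu⟩ := hunb (max (n * b) (a * b / (b - a)))
  have hu_nb : n * b < u := (le_max_left _ _).trans_lt hu
  have hu_ab : a * b / (b - a) < u := (le_max_right _ _).trans_lt hu
  have hu0 : 0 < u := (div_pos (mul_pos ha hb) (sub_pos.mpr hab)).trans hu_ab
  obtain ⟨k, hk_lo, hk_hi⟩ := exists_nat_btwn_of_add_one_lt (div_nonneg hu0.le hb.le)
    (div_add_one_lt_div_of_mul_div_sub_lt ha hab hu_ab)
  have hk0 : (0 : ℝ) < k := (div_pos hu0 hb).trans hk_lo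
  have hnk : (n : ℝ) < k := ((lt_div_iff₀ hb).mpr hu_nb).trans hk_lo
  have hmem : u / k ∈ Ioo a b ∩ (fun t => (k : ℝ) * t) ⁻¹' U := by
    refine ⟨⟨?_, ?_⟩, ?_⟩
    · rw [lt_div_iff₀ hk0, mul_comm]; exact (lt_div_iff₀ ha).mp hk_hi
    · rw [div_lt_iff₀ hk0, mul_comm]; exact (div_lt_iff₀ hb).mp hk_lo
    · simpa [mul_div_cancel₀ u hk0.ne'] using huU
  obtain ⟨a', b', hab', hsub⟩ :=
    (isOpen_Ioo.inter (hU.preimage (continuous_const_mul _))).exists_Icc_subset ⟨_, hmem⟩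
  exact ⟨k, by exact_mod_cast hnk.le, a', b', hab', fun t ht => (hsub ht).1,
    fun t ht => (hsub ht).2⟩

theorem croft_lemma_intervals (U : Set ℝ) (hU : IsOpen U) (hsub : U ⊆ Set.Ioi (0:ℝ))
    (hunb : ∀ M : ℝ, ∃ u ∈ U, u > M)
    (a b : ℝ) (ha : 0 < a) (hab : a < b) (n : ℕ) :
    ∃ n' : ℕ, n' ≥ n ∧ ∃ a' b' : ℝ, a' < b' ∧ Set.Icc a' b' ⊆ Set.Ioo a b ∧
      ∀ t ∈ Set.Icc a' b', (n' : ℝ) * t ∈ U :=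
  croft_lemma_intervals_general U hU hunb a b ha hab n
end

section
/- If (a_n) is an increasing sequence of reals with a_n → ∞ and a_{n+1} − a_n → 0, and f : ℝ → ℝ is continuous with lim_{n→∞} f(x + a_n) existing for every x ∈ ℝ, then lim_{x→∞} f(x) exists. -/
theorem croft_additive (a : ℕ → ℝ) (hmono : Monotone a)
    (htop : Filter.Tendsto a Filter.atTop Filter.atTop)
    (hdiff : Filter.Tendsto (fun n => a (n + 1) - a n) Filter.atTop (nhds 0))
    (f : ℝ → ℝ) (hf : Continuous f)
    (h : ∀ x : ℝ, ∃ L : ℝ, Filter.Tendsto (fun n => f (x + a n)) Filter.atTop (nhds L)) :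
    ∃ L : ℝ, Filter.Tendsto f Filter.atTop (nhds L) := by
  classical
  have key : ∀ ε : ℝ, 0 < ε → ∃ T : ℝ, ∀ y y' : ℝ, T ≤ y → T ≤ y' →
      |f y - f y'| ≤ 4 * ε := by
    intro ε hε
    set S : ℕ → Set ℝ :=
      fun N => {x | ∀ m, N ≤ m → ∀ n, N ≤ n → |f (x + a m) - f (x + a n)| ≤ ε} with hSdef
    have hclosed : ∀ N, IsClosed (S N) := by
      intro N
      have hEq : S N = ⋂ (m : ℕ) (_ : N ≤ m) (n : ℕ) (_ : N ≤ n),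
          {x : ℝ | |f (x + a m) - f (x + a n)| ≤ ε} := by
        ext x
        simp [hSdef, Set.mem_iInter]
      rw [hEq]
      refine isClosed_iInter fun m => isClosed_iInter fun _ =>
        isClosed_iInter fun n => isClosed_iInter fun _ => ?_
      exact isClosed_le (by continuity) continuous_const
    have hunion : ⋃ N, S N = Set.univ := by
      ext x
      simp only [Set.mem_iUnion, Set.mem_univ, iff_true]
      obtain ⟨L, hL⟩ := h x
      obtain ⟨N, hN⟩ := (Metric.cauchySeq_iff.mp hL.cauchySeq) ε hε
      exact ⟨N, fun m hm n hn => by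
        have := hN m hm n hn
        rw [Real.dist_eq] at this
        exact this.le⟩
    obtain ⟨N, x₀, hx₀⟩ := nonempty_interior_of_iUnion_of_closed hclosed hunion
    obtain ⟨δ, hδpos, hball⟩ := Metric.isOpen_iff.mp isOpen_interior x₀ hx₀
    have hballS : Metric.ball x₀ δ ⊆ S N := hball.trans interior_subset
    obtain ⟨δ', hδ'pos, hδ'⟩ := Metric.continuous_iff.mp hf (x₀ + a N) ε hε
    obtain ⟨N₂, hN₂⟩ := (Metric.tendsto_atTop.mp hdiff) (min δ δ') (lt_min hδpos hδ'pos)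
    obtain ⟨N₁, hN₁a, hN₁b⟩ : ∃ N₁, N ≤ N₁ ∧ N₂ ≤ N₁ :=
      ⟨max N N₂, le_max_left _ _, le_max_right _ _⟩
    refine ⟨x₀ + a N₁, ?_⟩
    have main : ∀ y : ℝ, x₀ + a N₁ ≤ y → |f y - f (x₀ + a N)| ≤ 2 * ε := by
      intro y hy
      have hex : ∃ k, y - x₀ < a k := by
        obtain ⟨k, hk⟩ := (htop.eventually (Filter.eventually_gt_atTop (y - x₀))).exists
        exact ⟨k, hk⟩
      set m := Nat.find hex with hm
      have hmspec : y - x₀ < a m := Nat.find_spec hex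
      have hmge : N₁ + 1 ≤ m := by
        by_contra hcon
        push_neg at hcon
        have hle : m ≤ N₁ := Nat.lt_succ_iff.mp hcon
        have : a m ≤ a N₁ := hmono hle
        have : a N₁ ≤ y - x₀ := by linarith
        linarith
      have hmpos : 0 < m := Nat.lt_of_lt_of_le (Nat.succ_pos N₁) hmge
      set n := m - 1 with hn
      have hmn : n + 1 = m := Nat.succ_pred_eq_of_pos hmpos
      have hnge : N₁ ≤ n := Nat.le_sub_one_of_lt hmge
      have hnlow : a n ≤ y - x₀ := by
        by_contra hcon
        push_neg at hcon
        exact absurd (Nat.find_min' hex hcon) (Nat.not_le.mpr (Nat.sub_lt hmpos one_pos))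
      set x := y - a n with hx
      have hxlow : x₀ ≤ x := by simp [hx]; linarith
      have hgap : a (n + 1) - a n < min δ δ' := by
        have := hN₂ n (le_trans hN₁b hnge)
        rwa [Real.dist_eq, sub_zero, abs_of_nonneg (by linarith [hmono (Nat.le_succ n)])] at this
      have hxhigh : x - x₀ < min δ δ' := by
        have : y - x₀ < a (n + 1) := by rw [hmn]; exact hmspec
        simp only [hx]; linarith
      have hxball : x ∈ Metric.ball x₀ δ := by
        rw [Metric.mem_ball, Real.dist_eq, abs_of_nonneg (by linarith)]
        exact lt_of_lt_of_le hxhigh (min_le_left _ _)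
      have hxS : x ∈ S N := hballS hxball
      have h1 : |f (x + a n) - f (x + a N)| ≤ ε :=
        hxS n (le_trans hN₁a hnge) N le_rfl
      have h2 : |f (x + a N) - f (x₀ + a N)| ≤ ε := by
        have : dist (x + a N) (x₀ + a N) < δ' := by
          rw [Real.dist_eq]
          have : |x + a N - (x₀ + a N)| = |x - x₀| := by ring_nf
          rw [this, abs_of_nonneg (by linarith)]
          exact lt_of_lt_of_le hxhigh (min_le_right _ _)
        exact (hδ' _ this).le
      have hxy : x + a n = y := by simp [hx]
      calc |f y - f (x₀ + a N)|
          ≤ |f y - f (x + a N)| + |f (x + a N) - f (x₀ + a N)| := abs_sub_le _ _ _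
        _ ≤ ε + ε := by
            rw [← hxy]
            exact add_le_add h1 h2
        _ = 2 * ε := by ring
    intro y y' hy hy'
    calc |f y - f y'| ≤ |f y - f (x₀ + a N)| + |f (x₀ + a N) - f y'| := abs_sub_le _ _ _
      _ ≤ 2 * ε + 2 * ε := by
          refine add_le_add (main y hy) ?_
          rw [abs_sub_comm]
          exact main y' hy'
      _ = 4 * ε := by ring
  have hcau : Cauchy (Filter.map f Filter.atTop) := by
    rw [Metric.cauchy_iff]
    refine ⟨Filter.map_neBot, fun ε hε => ?_⟩
    obtain ⟨T, hT⟩ := key (ε / 5) (by positivity)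
    refine ⟨f '' Set.Ici T, Filter.image_mem_map (Filter.Ici_mem_atTop T), ?_⟩
    rintro _ ⟨y, hy, rfl⟩ _ ⟨y', hy', rfl⟩
    rw [Real.dist_eq]
    calc |f y - f y'| ≤ 4 * (ε / 5) := hT y y' hy hy'
      _ < ε := by linarith
  obtain ⟨L, hL⟩ := CompleteSpace.complete hcau
  exact ⟨L, hL⟩
end
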